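/- arXiv:2411.09017 — 11 statements merged into one kernel-verified Lean document; each statement's English description precedes it below -/
import Mathlib

section
/- Let 0 < β be a real number and let S and S₀ be C¹ survival functions on [0,β] with S(0) = S₀(0) = 1, with hazard rates λ(u) := −S'(u)/S(u) and λ₀(u) := −S₀'(u)/S₀(u). Then for every y ∈ [0,β], S(y) − S₀(y) = −S(y) · ∫₀^y (S₀(u)/S(u)) · (λ(u) − λ₀(u)) du. (Duhamel equation, continuous case, Theorem 6 of Gill–Johansen as used in the paper.) -/
/-!
On `[0, y]` the quotient `S₀ / S` has derivative `(S₀ / S) (λ - λ₀)`, so by the fundamental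
theorem of calculus the integral equals `S₀ y / S y - S₀ 0 / S 0 = S₀ y / S y - 1`;
multiplying by `-S y` gives `S y - S₀ y`.
-/

open Set intervalIntegral

noncomputable def hazardRate (S S' : ℝ → ℝ) (u : ℝ) : ℝ := -S' u / S u

section Quotient

variable {f f' g g' : ℝ → ℝ}

theorem hasDerivAt_div_eq_mul_hazardRate_sub {x : ℝ} (hf : HasDerivAt f (f' x) x)
    (hg : HasDerivAt g (g' x) x) (hf0 : f x ≠ 0) (hg0 : g x ≠ 0) :
    HasDerivAt (fun u => f u / g u)
      (f x / g x * (hazardRate g g' x - hazardRate f f' x)) x := by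
  have h : HasDerivAt (fun u => f u / g u) ((f' x * g x - f x * g' x) / g x ^ 2) x :=
    hf.div hg hg0
  convert h using 1
  unfold hazardRate
  field_simp
  ring

theorem ContinuousOn.div_mul_hazardRate_sub {s : Set ℝ} (hf : ContinuousOn f s)
    (hf' : ContinuousOn f' s) (hg : ContinuousOn g s) (hg' : ContinuousOn g' s)
    (hf0 : ∀ u ∈ s, f u ≠ 0) (hg0 : ∀ u ∈ s, g u ≠ 0) :
    ContinuousOn (fun u => f u / g u * (hazardRate g g' u - hazardRate f f' u)) s :=
  (hf.div hg hg0).mul ((hg'.neg.div hg hg0).sub (hf'.neg.div hf hf0))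

theorem integral_div_mul_hazardRate_sub {a b : ℝ} (hab : a ≤ b)
    (hf : ∀ u ∈ Icc a b, HasDerivAt f (f' u) u) (hf' : ContinuousOn f' (Icc a b))
    (hg : ∀ u ∈ Icc a b, HasDerivAt g (g' u) u) (hg' : ContinuousOn g' (Icc a b))
    (hf0 : ∀ u ∈ Icc a b, f u ≠ 0) (hg0 : ∀ u ∈ Icc a b, g u ≠ 0) :
    ∫ u in a..b, f u / g u * (hazardRate g g' u - hazardRate f f' u)
      = f b / g b - f a / g a := by
  have hcont : ContinuousOn (fun u => f u / g u * (hazardRate g g' u - hazardRate f f' u))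
      (Icc a b) :=
    .div_mul_hazardRate_sub (fun u hu => (hf u hu).continuousAt.continuousWithinAt) hf'
      (fun u hu => (hg u hu).continuousAt.continuousWithinAt) hg' hf0 hg0
  refine integral_eq_sub_of_hasDerivAt (f := fun u => f u / g u) (fun u hu => ?_) (hcont.intervalIntegrable_of_Icc hab)
  rw [uIcc_of_le hab] at hu
  exact hasDerivAt_div_eq_mul_hazardRate_sub (hf u hu) (hg u hu) (hf0 u hu) (hg0 u hu)

end Quotient

theorem duhamel_continuous_general
    (β : ℝ)
    (S S' S₀ S₀' : ℝ → ℝ)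
    (hS : ∀ y ∈ Icc (0:ℝ) β, HasDerivAt S (S' y) y)
    (hS' : ContinuousOn S' (Icc 0 β))
    (hSpos : ∀ y ∈ Icc (0:ℝ) β, 0 < S y ∧ S y ≤ 1)
    (hS₀ : ∀ y ∈ Icc (0:ℝ) β, HasDerivAt S₀ (S₀' y) y)
    (hS₀' : ContinuousOn S₀' (Icc 0 β))
    (hS₀pos : ∀ y ∈ Icc (0:ℝ) β, 0 < S₀ y ∧ S₀ y ≤ 1)
    (hS0 : S 0 = 1) (hS₀0 : S₀ 0 = 1) :
    ∀ y ∈ Icc (0:ℝ) β,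
      S y - S₀ y
        = -(S y) * ∫ u in (0:ℝ)..y,
            (S₀ u / S u) * ((-(S' u) / S u) - (-(S₀' u) / S₀ u)) := by
  intro y hy
  have hsub : Icc 0 y ⊆ Icc 0 β := Icc_subset_Icc_right hy.2
  have hint := integral_div_mul_hazardRate_sub hy.1
    (fun u hu => hS₀ u (hsub hu)) (hS₀'.mono hsub) (fun u hu => hS u (hsub hu)) (hS'.mono hsub)
    (fun u hu => (hS₀pos u (hsub hu)).1.ne') (fun u hu => (hSpos u (hsub hu)).1.ne')
  simp only [hazardRate, hS0, hS₀0] at hint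
  rw [hint]
  field_simp [(hSpos y hy).1.ne']
  ring

/-- Duhamel equation, continuous case: for C¹ survival functions `S`, `S₀` on `[0,β]`
with `S 0 = S₀ 0 = 1` and hazard rates `λ = -S'/S`, `λ₀ = -S₀'/S₀`,
`S y - S₀ y = -S y * ∫₀^y (S₀ u / S u) (λ u - λ₀ u) du`. -/
theorem duhamel_continuous
    (β : ℝ) (hβ : 0 < β)
    (S S' S₀ S₀' : ℝ → ℝ)
    (hS : ∀ y ∈ Icc (0:ℝ) β, HasDerivAt S (S' y) y)
    (hS' : ContinuousOn S' (Icc 0 β))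
    (hSmono : AntitoneOn S (Icc 0 β))
    (hSpos : ∀ y ∈ Icc (0:ℝ) β, 0 < S y ∧ S y ≤ 1)
    (hS₀ : ∀ y ∈ Icc (0:ℝ) β, HasDerivAt S₀ (S₀' y) y)
    (hS₀' : ContinuousOn S₀' (Icc 0 β))
    (hS₀mono : AntitoneOn S₀ (Icc 0 β))
    (hS₀pos : ∀ y ∈ Icc (0:ℝ) β, 0 < S₀ y ∧ S₀ y ≤ 1)
    (hS0 : S 0 = 1) (hS₀0 : S₀ 0 = 1) :
    ∀ y ∈ Icc (0:ℝ) β,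
      S y - S₀ y
        = -(S y) * ∫ u in (0:ℝ)..y,
            (S₀ u / S u) * ((-(S' u) / S u) - (-(S₀' u) / S₀ u)) :=
  duhamel_continuous_general β S S' S₀ S₀' hS hS' hSpos hS₀ hS₀' hS₀pos hS0 hS₀0
end

section
/- Let 0 < β be a real number, let S and S₀ be C¹ survival functions on [0,β] with S(0) = S₀(0) = 1, with densities f := −S', f₀ := −S₀' and hazard rates λ := −S'/S, λ₀ := −S₀'/S₀, and let φ : ℝ → ℝ be continuously differentiable on [0,β]. Then ∫₀^β φ(y)(f(y) − f₀(y)) dy + φ(β)(S(β) − S₀(β)) = −∫₀^β L_S(y) · (S₀(y)/S(y)) · (λ(y) − λ₀(y)) dy, where L_S(y) := ∫_y^β S(u) φ'(u) du. (Lemma 1(a), differentiable case with boundary term accounting for the constancy of φ beyond β.) -/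
open Set intervalIntegral MeasureTheory

/-!
Both sides equal `∫₀^β φ' (S - S₀)`. On the left this is integration by parts, the boundary
term at `0` vanishing because `S 0 = S₀ 0`. On the right, `(S₀/S)(λ - λ₀)` is exactly the
derivative of `S₀/S`, while `L_S' = -S φ'` and `L_S β = 0`; integrating by parts once more gives
`∫₀^β S φ' (S₀/S) - L_S 0 · (S₀ 0 / S 0) = ∫₀^β φ' S₀ - ∫₀^β S φ'`.
-/

theorem hasDerivAt_integral_tail {g : ℝ → ℝ} {a b y : ℝ} (hg : ContinuousOn g (Icc a b))
    (hy : y ∈ Ioo a b) : HasDerivAt (fun x => ∫ u in x..b, g u) (-g y) y :=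
  integral_hasDerivAt_left
    (hg.mono (uIcc_subset_Icc (Ioo_subset_Icc_self hy)
      ⟨(hy.1.trans hy.2).le, le_rfl⟩)).intervalIntegrable
    ((hg.mono Ioo_subset_Icc_self).stronglyMeasurableAtFilter isOpen_Ioo y hy)
    (hg.continuousAt (Icc_mem_nhds hy.1 hy.2))

theorem integral_integral_tail_mul_deriv {a b : ℝ} (hab : a ≤ b) {g r r' : ℝ → ℝ}
    (hg : ContinuousOn g (Icc a b)) (hr : ∀ y ∈ Icc a b, HasDerivAt r (r' y) y)
    (hr' : IntervalIntegrable r' volume a b) :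
    ∫ y in a..b, (∫ u in y..b, g u) * r' y
      = (∫ y in a..b, g y * r y) - (∫ y in a..b, g y) * r a := by
  have hgi : IntegrableOn g (uIcc a b) := (uIcc_of_le hab ▸ hg).integrableOn_uIcc
  rw [integral_mul_deriv_eq_deriv_mul_of_hasDerivAt (u' := fun y => -g y)
    (continuousOn_primitive_interval_left hgi)
    (fun y hy => (hr y (uIcc_of_le hab ▸ hy)).continuousAt.continuousWithinAt)
    (fun y hy => hasDerivAt_integral_tail hg (by simpa [hab] using hy))
    (fun y hy => hr y (Ioo_subset_Icc_self (by simpa [hab] using hy)))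
    (hgi.intervalIntegrable).neg hr', integral_same]
  simp only [neg_mul, intervalIntegral.integral_neg]
  ring

theorem integral_mul_neg_deriv_sub_add_boundary {a b : ℝ} {u u' v v' w w' : ℝ → ℝ}
    (hu : ∀ x ∈ uIcc a b, HasDerivAt u (u' x) x)
    (hv : ∀ x ∈ uIcc a b, HasDerivAt v (v' x) x)
    (hw : ∀ x ∈ uIcc a b, HasDerivAt w (w' x) x) (hu' : IntervalIntegrable u' volume a b)
    (hv' : IntervalIntegrable v' volume a b) (hw' : IntervalIntegrable w' volume a b)
    (ha : v a = w a) :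
    (∫ x in a..b, u x * (-v' x - -w' x)) + u b * (v b - w b)
      = ∫ x in a..b, u' x * (v x - w x) := by
  have hparts := integral_mul_deriv_eq_deriv_mul hu (fun x hx => (hw x hx).sub (hv x hx)) hu'
    (hw'.sub hv')
  have hflip : ∫ x in a..b, u' x * (w x - v x) = -∫ x in a..b, u' x * (v x - w x) := by
    rw [← intervalIntegral.integral_neg]
    congr with x
    ring
  simp only [Pi.sub_apply, ha, sub_self, mul_zero, sub_zero, hflip] at hparts
  simp_rw [neg_sub_neg]
  rw [hparts]
  ring

theorem hasDerivAt_div_eq_mul_hazard_sub {S S' S₀ S₀' : ℝ → ℝ} {y : ℝ}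
    (hS : HasDerivAt S (S' y) y) (hS₀ : HasDerivAt S₀ (S₀' y) y) (hSy : S y ≠ 0)
    (hS₀y : S₀ y ≠ 0) :
    HasDerivAt (fun x => S₀ x / S x) (S₀ y / S y * (-S' y / S y - -S₀' y / S₀ y)) y := by
  refine (hS₀.div hS hSy).congr_deriv ?_
  field_simp
  ring

theorem survival_integral_linearization_general
    (β : ℝ) (hβ : 0 < β)
    (S S' S₀ S₀' φ φ' : ℝ → ℝ)
    (hS : ∀ y ∈ Icc (0:ℝ) β, HasDerivAt S (S' y) y)
    (hS' : ContinuousOn S' (Icc 0 β))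
    (hSpos : ∀ y ∈ Icc (0:ℝ) β, 0 < S y ∧ S y ≤ 1)
    (hS₀ : ∀ y ∈ Icc (0:ℝ) β, HasDerivAt S₀ (S₀' y) y)
    (hS₀' : ContinuousOn S₀' (Icc 0 β))
    (hS₀pos : ∀ y ∈ Icc (0:ℝ) β, 0 < S₀ y ∧ S₀ y ≤ 1)
    (hS0 : S 0 = 1) (hS₀0 : S₀ 0 = 1)
    (hφ : ∀ y ∈ Icc (0:ℝ) β, HasDerivAt φ (φ' y) y)
    (hφ' : ContinuousOn φ' (Icc 0 β)) :
    (∫ y in (0:ℝ)..β, φ y * ((-(S' y)) - (-(S₀' y))))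
        + φ β * (S β - S₀ β)
      = -∫ y in (0:ℝ)..β,
          (∫ u in y..β, S u * φ' u) * (S₀ y / S y)
            * ((-(S' y) / S y) - (-(S₀' y) / S₀ y)) := by
  have hIcc : uIcc 0 β = Icc 0 β := uIcc_of_le hβ.le
  have hSne : ∀ y ∈ Icc 0 β, S y ≠ 0 := fun y hy => (hSpos y hy).1.ne'
  have hS₀ne : ∀ y ∈ Icc 0 β, S₀ y ≠ 0 := fun y hy => (hS₀pos y hy).1.ne'
  have hScont : ContinuousOn S (Icc 0 β) := fun y hy => (hS y hy).continuousAt.continuousWithinAt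
  have hS₀cont : ContinuousOn S₀ (Icc 0 β) := fun y hy =>
    (hS₀ y hy).continuousAt.continuousWithinAt
  have hdivDerivIntegrable : IntervalIntegrable (fun y => S₀ y / S y * (-S' y / S y - -S₀' y / S₀ y))
      volume 0 β :=
    (hIcc ▸ (hS₀cont.div hScont hSne).mul
      ((hS'.neg.div hScont hSne).sub (hS₀'.neg.div hS₀cont hS₀ne))).intervalIntegrable
  rw [integral_mul_neg_deriv_sub_add_boundary (hIcc ▸ hφ) (hIcc ▸ hS) (hIcc ▸ hS₀)
    (hIcc ▸ hφ').intervalIntegrable (hIcc ▸ hS').intervalIntegrable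
    (hIcc ▸ hS₀').intervalIntegrable (hS0.trans hS₀0.symm)]
  simp only [mul_assoc]
  rw [integral_integral_tail_mul_deriv (g := fun u => S u * φ' u) hβ.le (hScont.mul hφ')
    (fun y hy => hasDerivAt_div_eq_mul_hazard_sub (hS y hy) (hS₀ y hy) (hSne y hy) (hS₀ne y hy))
    hdivDerivIntegrable]
  have hcancel : ∫ y in 0..β, S y * φ' y * (S₀ y / S y) = ∫ y in 0..β, φ' y * S₀ y :=
    integral_congr fun y hy => by
      have hSy := hSne y (hIcc ▸ hy)
      field_simp
  rw [hcancel, hS0, hS₀0, div_one, mul_one, neg_sub,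
    ← intervalIntegral.integral_sub (hIcc ▸ hScont.mul hφ').intervalIntegrable
      (hIcc ▸ hφ'.mul hS₀cont).intervalIntegrable]
  exact integral_congr fun y _ => by ring

/-- Lemma 1(a), differentiable case: with densities `f = -S'`, `f₀ = -S₀'` and hazard rates
`λ = -S'/S`, `λ₀ = -S₀'/S₀`, and `L_S y = ∫_y^β S u * φ' u du`,
`∫₀^β φ (f - f₀) + φ β (S β - S₀ β) = -∫₀^β L_S y (S₀ y / S y)(λ y - λ₀ y) dy`. -/
theorem survival_integral_linearization
    (β : ℝ) (hβ : 0 < β)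
    (S S' S₀ S₀' φ φ' : ℝ → ℝ)
    (hS : ∀ y ∈ Icc (0:ℝ) β, HasDerivAt S (S' y) y)
    (hS' : ContinuousOn S' (Icc 0 β))
    (hSmono : AntitoneOn S (Icc 0 β))
    (hSpos : ∀ y ∈ Icc (0:ℝ) β, 0 < S y ∧ S y ≤ 1)
    (hS₀ : ∀ y ∈ Icc (0:ℝ) β, HasDerivAt S₀ (S₀' y) y)
    (hS₀' : ContinuousOn S₀' (Icc 0 β))
    (hS₀mono : AntitoneOn S₀ (Icc 0 β))
    (hS₀pos : ∀ y ∈ Icc (0:ℝ) β, 0 < S₀ y ∧ S₀ y ≤ 1)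
    (hS0 : S 0 = 1) (hS₀0 : S₀ 0 = 1)
    (hφ : ∀ y ∈ Icc (0:ℝ) β, HasDerivAt φ (φ' y) y)
    (hφ' : ContinuousOn φ' (Icc 0 β)) :
    (∫ y in (0:ℝ)..β, φ y * ((-(S' y)) - (-(S₀' y))))
        + φ β * (S β - S₀ β)
      = -∫ y in (0:ℝ)..β,
          (∫ u in y..β, S u * φ' u) * (S₀ y / S y)
            * ((-(S' y) / S y) - (-(S₀' y) / S₀ y)) :=
  survival_integral_linearization_general β hβ S S' S₀ S₀' φ φ' hS hS' hSpos hS₀ hS₀' hS₀pos hS0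
    hS₀0 hφ hφ'
end

section
/- Let 0 < β be a real number, let S and S₀ be C¹ survival functions on [0,β] with S(0) = S₀(0) = 1 and hazard rates λ := −S'/S, λ₀ := −S₀'/S₀, and let G be a finite Borel measure on ℝ. Define γ♮(y) := ∫_{[y,β]} S(w)⁻¹ dG(w). Then ∫_{[0,β]} (S(w) − S₀(w))/S(w)² dG(w) = −∫₀^β γ♮(y) · (S₀(y)/S(y)) · (λ(y) − λ₀(y)) dy, where the outer integral on the right is with respect to Lebesgue measure on [0,β]. (Lemma 1(b).) -/
open Set MeasureTheory intervalIntegral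

/-! Writing `r = S₀/S`, the integrand is `-(S w)⁻¹ (r w - 1)`. Since `S 0 = S₀ 0 = 1`,
`r w - 1 = ∫₀^w r'`, and `r' = r (λ - λ₀)`. Exchanging the `G`-integral over `w` with the
Lebesgue integral over `0 < y ≤ w` collects the weights `(S w)⁻¹` with `w ≥ y` into `γ♮ y`. -/

theorem setIntegral_mul_intervalIntegral_eq {μ : Measure ℝ} [SFinite μ] {g h : ℝ → ℝ}
    {a b : ℝ} (hab : a ≤ b) (hg : IntegrableOn g (Icc a b) μ) (hh : IntegrableOn h (Ioc a b)) :
    ∫ w in Icc a b, g w * (∫ y in a..w, h y) ∂μ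
      = ∫ y in a..b, (∫ w in Icc y b, g w ∂μ) * h y := by
  set T : Set (ℝ × ℝ) := {p | a < p.2 ∧ p.2 ≤ p.1}
  have hT : MeasurableSet T :=
    (measurableSet_lt measurable_const measurable_snd).inter
      (measurableSet_le measurable_snd measurable_fst)
  set F : ℝ → ℝ → ℝ := fun w y => T.indicator (fun p => g p.1 * h p.2) (w, y)
  have hF : Integrable (Function.uncurry F)
      ((μ.restrict (Icc a b)).prod (volume.restrict (Ioc a b))) :=
    (hg.mul_prod hh).indicator hT
  have h_left : ∀ w ∈ Icc a b, ∫ y in Ioc a b, F w y = g w * ∫ y in a..w, h y := by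
    intro w hw
    have hslice : F w = (Ioc a w).indicator (fun y => g w * h y) := by
      ext y; simp [F, T, indicator, and_comm]
    rw [hslice, MeasureTheory.integral_indicator measurableSet_Ioc,
      Measure.restrict_restrict measurableSet_Ioc, inter_eq_left.mpr (Ioc_subset_Ioc_right hw.2),
      MeasureTheory.integral_const_mul, integral_of_le hw.1]
  have h_right : ∀ y ∈ Ioc a b, ∫ w in Icc a b, F w y ∂μ = (∫ w in Icc y b, g w ∂μ) * h y := by
    intro y hy
    have hslice : (fun w => F w y) = (Ici y).indicator (fun w => g w * h y) := by
      ext w; simp [F, T, indicator, hy.1]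
    have hIcc : Ici y ∩ Icc a b = Icc y b := by
      ext w; simp only [mem_inter_iff, mem_Ici, mem_Icc]; grind
    rw [hslice, MeasureTheory.integral_indicator measurableSet_Ici,
      Measure.restrict_restrict measurableSet_Ici, hIcc, MeasureTheory.integral_mul_const]
  calc ∫ w in Icc a b, g w * (∫ y in a..w, h y) ∂μ
      = ∫ w in Icc a b, (∫ y in Ioc a b, F w y) ∂μ :=
        setIntegral_congr_fun measurableSet_Icc fun w hw => (h_left w hw).symm
    _ = ∫ y in Ioc a b, (∫ w in Icc a b, F w y ∂μ) := integral_integral_swap hF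
    _ = ∫ y in a..b, (∫ w in Icc y b, g w ∂μ) * h y := by
        rw [integral_of_le hab]
        exact setIntegral_congr_fun measurableSet_Ioc h_right

theorem HasDerivAt.div_hazard {f g : ℝ → ℝ} {f' g' x : ℝ} (hf : HasDerivAt f f' x)
    (hg : HasDerivAt g g' x) (hfx : f x ≠ 0) (hgx : g x ≠ 0) :
    HasDerivAt (fun z => f z / g z) (f x / g x * (-g' / g x - -f' / f x)) x := by
  refine (hf.div hg hgx).congr_deriv ?_
  field_simp
  ring

theorem truncation_weight_linearization_general
    (β : ℝ) (hβ : 0 < β)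
    (S S' S₀ S₀' : ℝ → ℝ)
    (hS : ∀ y ∈ Icc (0:ℝ) β, HasDerivAt S (S' y) y)
    (hS' : ContinuousOn S' (Icc 0 β))
    (hSpos : ∀ y ∈ Icc (0:ℝ) β, 0 < S y ∧ S y ≤ 1)
    (hS₀ : ∀ y ∈ Icc (0:ℝ) β, HasDerivAt S₀ (S₀' y) y)
    (hS₀' : ContinuousOn S₀' (Icc 0 β))
    (hS₀pos : ∀ y ∈ Icc (0:ℝ) β, 0 < S₀ y ∧ S₀ y ≤ 1)
    (hS0 : S 0 = 1) (hS₀0 : S₀ 0 = 1)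
    (G : Measure ℝ) [IsFiniteMeasure G] :
    (∫ w in Icc (0:ℝ) β, (S w - S₀ w) / (S w)^2 ∂G)
      = -∫ y in (0:ℝ)..β,
          (∫ w in Icc y β, (S w)⁻¹ ∂G) * (S₀ y / S y)
            * ((-(S' y) / S y) - (-(S₀' y) / S₀ y)) := by
  set ρ : ℝ → ℝ := fun y => S₀ y / S y * (-(S' y) / S y - -(S₀' y) / S₀ y)
  have hSne : ∀ y ∈ Icc 0 β, S y ≠ 0 := fun y hy => (hSpos y hy).1.ne'
  have hS₀ne : ∀ y ∈ Icc 0 β, S₀ y ≠ 0 := fun y hy => (hS₀pos y hy).1.ne'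
  have hSc : ContinuousOn S (Icc 0 β) := fun y hy => (hS y hy).continuousAt.continuousWithinAt
  have hS₀c : ContinuousOn S₀ (Icc 0 β) :=
    fun y hy => (hS₀ y hy).continuousAt.continuousWithinAt
  have hρc : ContinuousOn ρ (Icc 0 β) :=
    (hS₀c.div hSc hSne).mul ((hS'.neg.div hSc hSne).sub (hS₀'.neg.div hS₀c hS₀ne))
  have hFTC : ∀ w ∈ Icc 0 β, ∫ y in 0..w, ρ y = S₀ w / S w - 1 := by
    intro w hw
    have hsub : uIcc 0 w ⊆ Icc 0 β := by
      rw [uIcc_of_le hw.1]; exact Icc_subset_Icc_right hw.2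
    rw [integral_eq_sub_of_hasDerivAt
      (fun y hy => (hS₀ y (hsub hy)).div_hazard (hS y (hsub hy)) (hS₀ne y (hsub hy))
        (hSne y (hsub hy)))
      ((hρc.mono hsub).intervalIntegrable), hS0, hS₀0, div_one]
  calc (∫ w in Icc (0:ℝ) β, (S w - S₀ w) / (S w)^2 ∂G)
      = -∫ w in Icc (0:ℝ) β, (S w)⁻¹ * (∫ y in 0..w, ρ y) ∂G := by
        rw [← MeasureTheory.integral_neg]
        refine setIntegral_congr_fun measurableSet_Icc fun w hw => ?_
        rw [hFTC w hw]
        field_simp [hSne w hw]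
        ring
    _ = -∫ y in (0:ℝ)..β, (∫ w in Icc y β, (S w)⁻¹ ∂G) * ρ y := by
        rw [setIntegral_mul_intervalIntegral_eq (g := fun w => (S w)⁻¹) hβ.le
          ((hSc.inv₀ hSne).integrableOn_Icc) (hρc.integrableOn_Icc.mono_set Ioc_subset_Icc_self)]
    _ = _ := by simp only [ρ, mul_assoc]

/-- Lemma 1(b): for C¹ survival functions `S`, `S₀` on `[0,β]` with `S 0 = S₀ 0 = 1`,
hazard rates `λ = -S'/S`, `λ₀ = -S₀'/S₀`, a finite Borel measure `G`, and the partial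
truncation weight `γ♮ y = ∫_{[y,β]} S(w)⁻¹ dG(w)`,
`∫_{[0,β]} (S - S₀)/S² dG = -∫₀^β γ♮ y (S₀ y/S y)(λ y - λ₀ y) dy`. -/
theorem truncation_weight_linearization
    (β : ℝ) (hβ : 0 < β)
    (S S' S₀ S₀' : ℝ → ℝ)
    (hS : ∀ y ∈ Icc (0:ℝ) β, HasDerivAt S (S' y) y)
    (hS' : ContinuousOn S' (Icc 0 β))
    (hSmono : AntitoneOn S (Icc 0 β))
    (hSpos : ∀ y ∈ Icc (0:ℝ) β, 0 < S y ∧ S y ≤ 1)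
    (hS₀ : ∀ y ∈ Icc (0:ℝ) β, HasDerivAt S₀ (S₀' y) y)
    (hS₀' : ContinuousOn S₀' (Icc 0 β))
    (hS₀mono : AntitoneOn S₀ (Icc 0 β))
    (hS₀pos : ∀ y ∈ Icc (0:ℝ) β, 0 < S₀ y ∧ S₀ y ≤ 1)
    (hS0 : S 0 = 1) (hS₀0 : S₀ 0 = 1)
    (G : Measure ℝ) [IsFiniteMeasure G] :
    (∫ w in Icc (0:ℝ) β, (S w - S₀ w) / (S w)^2 ∂G)
      = -∫ y in (0:ℝ)..β,
          (∫ w in Icc y β, (S w)⁻¹ ∂G) * (S₀ y / S y)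
            * ((-(S' y) / S y) - (-(S₀' y) / S₀ y)) :=
  truncation_weight_linearization_general β hβ S S' S₀ S₀' hS hS' hSpos hS₀ hS₀' hS₀pos hS0 hS₀0 G
end

section
/- Let 0 ≤ α < β be real numbers, let S and S₀ be C¹ survival functions on [α,β] with hazard rates λ := −S'/S and λ₀ := −S₀'/S₀, let φ : ℝ → ℝ be continuously differentiable on [α,β], and set L_S(y) := ∫_y^β S(u) φ'(u) du and L_{S₀}(y) := ∫_y^β S₀(u) φ'(u) du. Let ω : ℝ → ℝ be continuously differentiable on [α,β] and put v := max(sup_{y∈[α,β]} |ω(y)|, ∫_α^β |ω'(y)| dy). Then |∫_α^β ω(y) [ (L_S(y)/S(y)) λ(y) − (L_{S₀}(y)/S₀(y)) λ₀(y) ] dy| ≤ 3 v · sup_{y∈[α,β]} |L_S(y)/S(y) − L_{S₀}(y)/S₀(y)|. (Lemma 1(c).) -/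
open Set intervalIntegral

/-!
With `D := L_S/S − L_{S₀}/S₀`, the identity `(L_S/S)' = −φ' + (L_S/S)·λ` shows that the
integrand is `ω·D'`: the `φ'` terms cancel. Since `D(β) = 0`, integration by parts gives
`∫ ω D' = −ω(α) D(α) − ∫ ω' D`, and each of the two terms is at most `v · sup |D|`.
-/

theorem abs_le_iSup_abs_of_continuousOn {X : Type*} [TopologicalSpace X] {f : X → ℝ}
    {s : Set X} (hs : IsCompact s) (hf : ContinuousOn f s) {x : X} (hx : x ∈ s) :
    |f x| ≤ ⨆ y : s, |f y| :=
  le_ciSup (f := fun y : s => |f y|)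
    (by simpa only [image_eq_range] using hs.bddAbove_image hf.abs) ⟨x, hx⟩

section TailIntegral

variable {f : ℝ → ℝ} {a b : ℝ}

theorem continuousOn_tail_integral (hab : a ≤ b) (hf : ContinuousOn f (Icc a b)) :
    ContinuousOn (fun y => ∫ u in y..b, f u) (Icc a b) := by
  have h := continuousOn_primitive_interval_left (μ := MeasureTheory.volume) (a := a) (b := b)
    (uIcc_of_le hab ▸ hf.integrableOn_Icc)
  rwa [uIcc_of_le hab] at h

theorem hasDerivAt_tail_integral (hf : ContinuousOn f (Icc a b)) {y : ℝ} (hy : y ∈ Ioo a b) :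
    HasDerivAt (fun y => ∫ u in y..b, f u) (-f y) y :=
  integral_hasDerivAt_left
    ((hf.mono (Icc_subset_Icc hy.1.le le_rfl)).intervalIntegrable_of_Icc hy.2.le)
    ((hf.mono Ioo_subset_Icc_self).stronglyMeasurableAtFilter isOpen_Ioo y hy)
    (hf.continuousAt (Icc_mem_nhds hy.1 hy.2))

end TailIntegral

theorem HasDerivAt.div_of_hasDerivAt_neg_mul {L S g : ℝ → ℝ} {S' y : ℝ}
    (hL : HasDerivAt L (-(S y * g y)) y) (hS : HasDerivAt S S' y) (hy : S y ≠ 0) :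
    HasDerivAt (fun z => L z / S z) (-g y + L y / S y * (-S' / S y)) y := by
  have h : HasDerivAt (fun z => L z / S z) _ y := hL.div hS hy
  convert h using 1
  field_simp
  ring

section TailIntegralRatio

variable {S S' g L : ℝ → ℝ} {a b : ℝ} (hS : ∀ y ∈ Icc a b, HasDerivAt S (S' y) y)
  (hSne : ∀ y ∈ Icc a b, S y ≠ 0) (hg : ContinuousOn g (Icc a b))
  (hL : ∀ y, L y = ∫ u in y..b, S u * g u)
include hS hSne hg hL

theorem continuousOn_tail_integral_div (hab : a ≤ b) :
    ContinuousOn (fun y => L y / S y) (Icc a b) := by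
  have hSc : ContinuousOn S (Icc a b) := fun y hy => (hS y hy).continuousAt.continuousWithinAt
  have hLc : ContinuousOn L (Icc a b) :=
    (continuousOn_tail_integral (f := fun u => S u * g u) hab (hSc.mul hg)).congr fun y _ => hL y
  exact hLc.div hSc hSne

theorem continuousOn_tail_integral_div_mul_hazard (hab : a ≤ b)
    (hS'c : ContinuousOn S' (Icc a b)) :
    ContinuousOn (fun y => L y / S y * (-S' y / S y)) (Icc a b) :=
  (continuousOn_tail_integral_div hS hSne hg hL hab).mul
    (hS'c.neg.div (fun y hy => (hS y hy).continuousAt.continuousWithinAt) hSne)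

theorem hasDerivAt_tail_integral_div {y : ℝ} (hy : y ∈ Ioo a b) :
    HasDerivAt (fun z => L z / S z) (-g y + L y / S y * (-S' y / S y)) y := by
  have hSc : ContinuousOn S (Icc a b) := fun y hy => (hS y hy).continuousAt.continuousWithinAt
  rw [show L = _ from funext hL]
  exact (hasDerivAt_tail_integral (hSc.mul hg) hy).div_of_hasDerivAt_neg_mul
    (hS y (Ioo_subset_Icc_self hy)) (hSne y (Ioo_subset_Icc_self hy))

end TailIntegralRatio

theorem abs_integral_mul_deriv_le {ω ω' D D' : ℝ → ℝ} {a b M : ℝ} (hab : a ≤ b)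
    (hω : ContinuousOn ω (Icc a b)) (hωd : ∀ y ∈ Ioo a b, HasDerivAt ω (ω' y) y)
    (hD : ContinuousOn D (Icc a b)) (hDd : ∀ y ∈ Ioo a b, HasDerivAt D (D' y) y)
    (hω' : IntervalIntegrable ω' MeasureTheory.volume a b)
    (hD' : IntervalIntegrable D' MeasureTheory.volume a b)
    (hDb : D b = 0) (hM : ∀ y ∈ Icc a b, |D y| ≤ M) :
    |∫ y in a..b, ω y * D' y| ≤ (|ω a| + ∫ y in a..b, |ω' y|) * M := by
  have hmem : a ∈ Icc a b := left_mem_Icc.2 hab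
  rw [← uIcc_of_le hab] at hω hD
  rw [integral_mul_deriv_eq_deriv_mul_of_hasDerivAt hω hD (by simpa [hab] using hωd)
    (by simpa [hab] using hDd) hω' hD', hDb, mul_zero, zero_sub]
  have hω'D := hω'.mul_continuousOn hD
  calc |-(ω a * D a) - ∫ y in a..b, ω' y * D y|
      ≤ |ω a| * |D a| + ∫ y in a..b, |ω' y * D y| := by
        rw [← abs_mul, ← abs_neg (ω a * D a)]
        exact (abs_sub _ _).trans (add_le_add_right (abs_integral_le_integral_abs hab) _)
    _ ≤ |ω a| * M + ∫ y in a..b, |ω' y| * M := by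
        gcongr
        · exact hM a hmem
        · refine integral_mono_on hab hω'D.abs (hω'.abs.mul_const M) fun y hy => ?_
          rw [abs_mul]
          exact mul_le_mul_of_nonneg_left (hM y hy) (abs_nonneg _)
    _ = (|ω a| + ∫ y in a..b, |ω' y|) * M := by
        rw [intervalIntegral.integral_mul_const, add_mul]

theorem weighted_hazard_integral_bound_general
    (α β : ℝ) (hαβ : α < β)
    (S S' S₀ S₀' φ' ω ω' : ℝ → ℝ)
    (hS : ∀ y ∈ Icc α β, HasDerivAt S (S' y) y)
    (hS'c : ContinuousOn S' (Icc α β))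
    (hSpos : ∀ y ∈ Icc α β, 0 < S y ∧ S y ≤ 1)
    (hS₀ : ∀ y ∈ Icc α β, HasDerivAt S₀ (S₀' y) y)
    (hS₀'c : ContinuousOn S₀' (Icc α β))
    (hS₀pos : ∀ y ∈ Icc α β, 0 < S₀ y ∧ S₀ y ≤ 1)
    (hφ'c : ContinuousOn φ' (Icc α β))
    (hω : ∀ y ∈ Icc α β, HasDerivAt ω (ω' y) y)
    (hω'c : ContinuousOn ω' (Icc α β))
    (L L₀ : ℝ → ℝ)
    (hL : ∀ y, L y = ∫ u in y..β, S u * φ' u)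
    (hL₀ : ∀ y, L₀ y = ∫ u in y..β, S₀ u * φ' u)
    (v : ℝ)
    (hv : v = max (⨆ y : Icc α β, |ω y.1|) (∫ y in α..β, |ω' y|)) :
    |∫ y in α..β,
        ω y * ((L y / S y) * (-(S' y) / S y) - (L₀ y / S₀ y) * (-(S₀' y) / S₀ y))|
      ≤ 3 * v * ⨆ y : Icc α β, |L y.1 / S y.1 - L₀ y.1 / S₀ y.1| := by
  have hab := hαβ.le
  have hαI : α ∈ Icc α β := left_mem_Icc.2 hab
  have hSne : ∀ y ∈ Icc α β, S y ≠ 0 := fun y hy => (hSpos y hy).1.ne'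
  have hS₀ne : ∀ y ∈ Icc α β, S₀ y ≠ 0 := fun y hy => (hS₀pos y hy).1.ne'
  set D := fun y => L y / S y - L₀ y / S₀ y
  set M := ⨆ y : Icc α β, |L y.1 / S y.1 - L₀ y.1 / S₀ y.1|
  have hDc : ContinuousOn D (Icc α β) :=
    (continuousOn_tail_integral_div hS hSne hφ'c hL hab).sub
      (continuousOn_tail_integral_div hS₀ hS₀ne hφ'c hL₀ hab)
  have hD'c := (continuousOn_tail_integral_div_mul_hazard hS hSne hφ'c hL hab hS'c).sub
    (continuousOn_tail_integral_div_mul_hazard hS₀ hS₀ne hφ'c hL₀ hab hS₀'c)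
  have hDd : ∀ y ∈ Ioo α β,
      HasDerivAt D (L y / S y * (-S' y / S y) - L₀ y / S₀ y * (-S₀' y / S₀ y)) y :=
    fun y hy => ((hasDerivAt_tail_integral_div hS hSne hφ'c hL hy).fun_sub
        (hasDerivAt_tail_integral_div hS₀ hS₀ne hφ'c hL₀ hy)).congr_deriv (by ring)
  have hDβ : D β = 0 := by simp [D, hL, hL₀]
  have hDM : ∀ y ∈ Icc α β, |D y| ≤ M := fun y hy =>
    abs_le_iSup_abs_of_continuousOn isCompact_Icc hDc hy
  have hωc : ContinuousOn ω (Icc α β) := fun y hy => (hω y hy).continuousAt.continuousWithinAt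
  have hωα : |ω α| ≤ v :=
    hv ▸ (abs_le_iSup_abs_of_continuousOn isCompact_Icc hωc hαI).trans (le_max_left _ _)
  have hω' : ∫ y in α..β, |ω' y| ≤ v := hv ▸ le_max_right _ _
  calc _ ≤ (|ω α| + ∫ y in α..β, |ω' y|) * M :=
        abs_integral_mul_deriv_le hab hωc (fun y hy => hω y (Ioo_subset_Icc_self hy)) hDc hDd
          (hω'c.intervalIntegrable_of_Icc hab) (hD'c.intervalIntegrable_of_Icc hab) hDβ hDM
    _ ≤ 3 * v * M := by
        have hv0 : 0 ≤ v := (abs_nonneg _).trans hωα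
        have hM0 : 0 ≤ M := (abs_nonneg _).trans (hDM α hαI)
        nlinarith

/-- Lemma 1(c): with `L_S y = ∫_y^β S u φ' u du`, `v = max(sup |ω|, ∫ |ω'|)`,
`|∫_α^β ω [ (L_S/S) λ - (L_{S₀}/S₀) λ₀ ]| ≤ 3 v sup_{[α,β]} |L_S/S - L_{S₀}/S₀|`. -/
theorem weighted_hazard_integral_bound
    (α β : ℝ) (hα : 0 ≤ α) (hαβ : α < β)
    (S S' S₀ S₀' φ φ' ω ω' : ℝ → ℝ)
    (hS : ∀ y ∈ Icc α β, HasDerivAt S (S' y) y)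
    (hS'c : ContinuousOn S' (Icc α β))
    (hSmono : AntitoneOn S (Icc α β))
    (hSpos : ∀ y ∈ Icc α β, 0 < S y ∧ S y ≤ 1)
    (hS₀ : ∀ y ∈ Icc α β, HasDerivAt S₀ (S₀' y) y)
    (hS₀'c : ContinuousOn S₀' (Icc α β))
    (hS₀mono : AntitoneOn S₀ (Icc α β))
    (hS₀pos : ∀ y ∈ Icc α β, 0 < S₀ y ∧ S₀ y ≤ 1)
    (hφ : ∀ y ∈ Icc α β, HasDerivAt φ (φ' y) y)
    (hφ'c : ContinuousOn φ' (Icc α β))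
    (hω : ∀ y ∈ Icc α β, HasDerivAt ω (ω' y) y)
    (hω'c : ContinuousOn ω' (Icc α β))
    (L L₀ : ℝ → ℝ)
    (hL : ∀ y, L y = ∫ u in y..β, S u * φ' u)
    (hL₀ : ∀ y, L₀ y = ∫ u in y..β, S₀ u * φ' u)
    (v : ℝ)
    (hv : v = max (⨆ y : Icc α β, |ω y.1|) (∫ y in α..β, |ω' y|)) :
    |∫ y in α..β,
        ω y * ((L y / S y) * (-(S' y) / S y) - (L₀ y / S₀ y) * (-(S₀' y) / S₀ y))|
      ≤ 3 * v * ⨆ y : Icc α β, |L y.1 / S y.1 - L₀ y.1 / S₀ y.1| :=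
  weighted_hazard_integral_bound_general α β hαβ S S' S₀ S₀' φ' ω ω' hS hS'c hSpos hS₀ hS₀'c hS₀pos
    hφ'c hω hω'c L L₀ hL hL₀ v hv
end

section
/- Let 0 ≤ α < β be real numbers, let S_P and S₀ be C¹ survival functions on [α,β] with hazard rates λ_P := −S_P'/S_P and λ₀ := −S₀'/S₀. Let g_P, g₀ : ℝ → [0,∞) be continuous on [α,β] with ∫_α^β g_P(u) du ≤ 1 and ∫_α^β g₀(u) du ≤ 1, and define G_P(y) := ∫_α^y g_P(u) du, G₀(y) := ∫_α^y g₀(u) du, γ_{P,♮}(y) := ∫_y^β g_P(w)/S_P(w) dw and γ_{0,♮}(y) := ∫_y^β g₀(w)/S₀(w) dw. Let ω : ℝ → ℝ be continuously differentiable on [α,β] and put v := max(sup_{y∈[α,β]} |ω(y)|, ∫_α^β |ω'(y)| dy). Then |∫_α^β ω(y) [ (γ_{P,♮}(y)/S_P(y)) λ_P(y) − (γ_{0,♮}(y)/S₀(y)) λ₀(y) ] dy| ≤ 3 v · sup_{[α,β]} |γ_{P,♮}/S_P − γ_{0,♮}/S₀| + (5 v / S₀(β)³) · sup_{[α,β]}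 |G_P − G₀| + (2 v / (S_P(β) S₀(β))) · sup_{[α,β]} |1/S_P − 1/S₀|. (Lemma 1(d), with explicit constant.) -/
/-!
Writing `ρ = γ♮ / S` and `λ = -S' / S`, the identity `γ♮' = -g / S` gives `ρ λ = ρ' + g / S²`.
Hence the integrand splits into `ω (ρ_P - ρ₀)'`, `ω (g_P - g₀) / S₀²` and
`ω g_P (1 / S_P² - 1 / S₀²)`. The first two are integrated by parts, against `ρ_P - ρ₀` and
`G_P - G₀` respectively; in the second, `1 / S₀²` is increasing, so the variation of `ω / S₀²` is
controlled by `v / S₀(β)²`. The third is bounded pointwise, using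
`1 / S_P² - 1 / S₀² = (1 / S_P - 1 / S₀) (1 / S_P + 1 / S₀)` and `∫ g_P ≤ 1`.
-/

open Set intervalIntegral MeasureTheory

section

variable {a b : ℝ}

theorem abs_le_ciSup_abs_of_continuousOn {f : ℝ → ℝ} (hf : ContinuousOn f (Icc a b)) {y : ℝ}
    (hy : y ∈ Icc a b) : |f y| ≤ ⨆ z : Icc a b, |f z| := by
  have hbdd : BddAbove (range fun z : Icc a b => |f z|) := by
    simpa [image_eq_range] using isCompact_Icc.bddAbove_image hf.abs
  exact le_ciSup hbdd ⟨y, hy⟩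

theorem hasDerivAt_integral_right_of_continuousOn {f : ℝ → ℝ} (hf : ContinuousOn f (Icc a b))
    {c x : ℝ} (hc : c ∈ Icc a b) (hx : x ∈ Ioo a b) :
    HasDerivAt (fun y => ∫ t in c..y, f t) (f x) x :=
  integral_hasDerivAt_right
    (hf.mono (uIcc_subset_Icc hc (Ioo_subset_Icc_self hx))).intervalIntegrable
    ((hf.mono Ioo_subset_Icc_self).stronglyMeasurableAtFilter isOpen_Ioo x hx)
    (hf.continuousAt (Icc_mem_nhds hx.1 hx.2))

theorem hasDerivAt_integral_left_of_continuousOn {f : ℝ → ℝ} (hf : ContinuousOn f (Icc a b))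
    {c x : ℝ} (hc : c ∈ Icc a b) (hx : x ∈ Ioo a b) :
    HasDerivAt (fun y => ∫ t in y..c, f t) (-f x) x :=
  integral_hasDerivAt_left
    (hf.mono (uIcc_subset_Icc (Ioo_subset_Icc_self hx) hc)).intervalIntegrable
    ((hf.mono Ioo_subset_Icc_self).stronglyMeasurableAtFilter isOpen_Ioo x hx)
    (hf.continuousAt (Icc_mem_nhds hx.1 hx.2))

theorem continuousOn_integral_left_of_continuousOn (hab : a ≤ b) {f : ℝ → ℝ}
    (hf : ContinuousOn f (Icc a b)) : ContinuousOn (fun y => ∫ t in y..b, f t) (Icc a b) := by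
  rw [← uIcc_of_le hab] at hf ⊢
  exact continuousOn_primitive_interval_left hf.integrableOn_uIcc

theorem continuousOn_integral_right_of_continuousOn (hab : a ≤ b) {f : ℝ → ℝ}
    (hf : ContinuousOn f (Icc a b)) : ContinuousOn (fun y => ∫ t in a..y, f t) (Icc a b) := by
  rw [← uIcc_of_le hab] at hf ⊢
  exact continuousOn_primitive_interval hf.integrableOn_uIcc

theorem abs_integral_mul_deriv_le_s4 (hab : a ≤ b) {u u' r r' : ℝ → ℝ} {V W M : ℝ}
    (hu : ContinuousOn u (Icc a b)) (hu' : ∀ x ∈ Ioo a b, HasDerivAt u (u' x) x)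
    (hu'i : IntervalIntegrable u' volume a b)
    (hr : ContinuousOn r (Icc a b)) (hr' : ∀ x ∈ Ioo a b, HasDerivAt r (r' x) x)
    (hr'i : IntervalIntegrable r' volume a b)
    (huV : ∀ x ∈ Icc a b, |u x| ≤ V) (huW : ∫ x in a..b, |u' x| ≤ W)
    (hrM : ∀ x ∈ Icc a b, |r x| ≤ M) :
    |∫ x in a..b, u x * r' x| ≤ (2 * V + W) * M := by
  have hV : 0 ≤ V := (abs_nonneg _).trans (huV a (left_mem_Icc.2 hab))
  have hM : 0 ≤ M := (abs_nonneg _).trans (hrM a (left_mem_Icc.2 hab))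
  have hbdry : ∀ x ∈ Icc a b, |u x * r x| ≤ V * M := fun x hx =>
    (abs_mul _ _).trans_le (mul_le_mul (huV x hx) (hrM x hx) (abs_nonneg _) hV)
  have hint : |∫ x in a..b, u' x * r x| ≤ W * M :=
    calc |∫ x in a..b, u' x * r x|
        ≤ ∫ x in a..b, |u' x| * M := by
          refine (abs_integral_le_integral_abs hab).trans
            (integral_mono_on hab ?_ ?_ fun x hx => ?_)
          · exact (hu'i.mul_continuousOn (by rwa [uIcc_of_le hab])).abs
          · exact hu'i.abs.mul_const M
          · exact (abs_mul _ _).trans_le (mul_le_mul_of_nonneg_left (hrM x hx) (abs_nonneg _))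
      _ = (∫ x in a..b, |u' x|) * M := integral_mul_const _ _
      _ ≤ W * M := mul_le_mul_of_nonneg_right huW hM
  rw [integral_mul_deriv_eq_deriv_mul_of_hasDeriv_right (by rwa [uIcc_of_le hab])
    (by rwa [uIcc_of_le hab])
    (by rw [min_eq_left hab, max_eq_right hab]; exact fun x hx => (hu' x hx).hasDerivWithinAt)
    (by rw [min_eq_left hab, max_eq_right hab]; exact fun x hx => (hr' x hx).hasDerivWithinAt)
    hu'i hr'i]
  calc _ ≤ |u b * r b| + |u a * r a| + |∫ x in a..b, u' x * r x| :=
        (abs_sub _ _).trans (add_le_add_left (abs_sub _ _) _)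
    _ ≤ (2 * V + W) * M := by
        linarith [hbdry a (left_mem_Icc.2 hab), hbdry b (right_mem_Icc.2 hab)]

theorem integral_abs_deriv_mul_le_of_monotoneOn (hab : a ≤ b) {ω ω' h h' : ℝ → ℝ} {V : ℝ}
    (hω : ContinuousOn ω (Icc a b)) (hω'i : IntervalIntegrable ω' volume a b)
    (hh : ContinuousOn h (Icc a b)) (hh' : ∀ x ∈ Ioo a b, HasDerivAt h (h' x) x)
    (hh'i : IntervalIntegrable h' volume a b) (hmono : MonotoneOn h (Icc a b)) (ha : 0 ≤ h a)
    (hωV : ∀ x ∈ Icc a b, |ω x| ≤ V) (hω'V : ∫ x in a..b, |ω' x| ≤ V) :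
    ∫ x in a..b, |ω' x * h x + ω x * h' x| ≤ 2 * V * h b := by
  have hV : 0 ≤ V := (abs_nonneg _).trans (hωV a (left_mem_Icc.2 hab))
  have hb : 0 ≤ h b := ha.trans (hmono (left_mem_Icc.2 hab) (right_mem_Icc.2 hab) hab)
  have hh'_nonneg : ∀ x ∈ Ioo a b, 0 ≤ h' x := fun x hx =>
    (hh' x hx).hasDerivWithinAt.nonneg_of_monotoneOn
      (uniqueDiffWithinAt_iff_accPt.1
        (uniqueDiffOn_Icc (hx.1.trans hx.2) x (Ioo_subset_Icc_self hx))) hmono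
  have hpointwise : ∀ x ∈ Ioo a b, |ω' x * h x + ω x * h' x| ≤ |ω' x| * h b + V * h' x := by
    intro x hx
    have hxI := Ioo_subset_Icc_self hx
    have hx0 : 0 ≤ h x := ha.trans (hmono (left_mem_Icc.2 hab) hxI hxI.1)
    calc |ω' x * h x + ω x * h' x| ≤ |ω' x| * h x + |ω x| * h' x := by
          simpa only [abs_mul, abs_of_nonneg hx0, abs_of_nonneg (hh'_nonneg x hx)] using
            abs_add_le (ω' x * h x) (ω x * h' x)
      _ ≤ |ω' x| * h b + V * h' x := by
          gcongr
          · exact hmono hxI (right_mem_Icc.2 hab) hxI.2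
          · exact hh'_nonneg x hx
          · exact hωV x hxI
  have hω'hi : IntervalIntegrable (fun x => |ω' x| * h b) volume a b := hω'i.abs.mul_const _
  calc ∫ x in a..b, |ω' x * h x + ω x * h' x|
      ≤ ∫ x in a..b, (|ω' x| * h b + V * h' x) := by
        refine integral_mono_on_of_le_Ioo hab ?_ (hω'hi.add (hh'i.const_mul V)) hpointwise
        rw [← uIcc_of_le hab] at hω hh
        exact ((hω'i.mul_continuousOn hh).add (hh'i.continuousOn_mul hω)).abs
    _ = (∫ x in a..b, |ω' x|) * h b + V * (h b - h a) := by
        rw [integral_add hω'hi (hh'i.const_mul V), intervalIntegral.integral_mul_const,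
          intervalIntegral.integral_const_mul,
          integral_eq_sub_of_hasDerivAt_of_le hab hh hh' hh'i]
    _ ≤ V * h b + V * h b := by
        gcongr
        linarith
    _ = 2 * V * h b := by ring

theorem abs_integral_mul_mul_deriv_le_of_monotoneOn (hab : a ≤ b) {ω ω' h h' r r' : ℝ → ℝ}
    {V M : ℝ} (hω : ContinuousOn ω (Icc a b)) (hω' : ∀ x ∈ Ioo a b, HasDerivAt ω (ω' x) x)
    (hω'i : IntervalIntegrable ω' volume a b)
    (hh : ContinuousOn h (Icc a b)) (hh' : ∀ x ∈ Ioo a b, HasDerivAt h (h' x) x)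
    (hh'i : IntervalIntegrable h' volume a b) (hmono : MonotoneOn h (Icc a b)) (ha : 0 ≤ h a)
    (hr : ContinuousOn r (Icc a b)) (hr' : ∀ x ∈ Ioo a b, HasDerivAt r (r' x) x)
    (hr'i : IntervalIntegrable r' volume a b)
    (hωV : ∀ x ∈ Icc a b, |ω x| ≤ V) (hω'V : ∫ x in a..b, |ω' x| ≤ V)
    (hrM : ∀ x ∈ Icc a b, |r x| ≤ M) :
    |∫ x in a..b, ω x * h x * r' x| ≤ 4 * V * h b * M := by
  have hωhV : ∀ x ∈ Icc a b, |ω x * h x| ≤ V * h b := by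
    intro x hx
    have hx0 : 0 ≤ h x := ha.trans (hmono (left_mem_Icc.2 hab) hx hx.1)
    rw [abs_mul, abs_of_nonneg hx0]
    exact mul_le_mul (hωV x hx) (hmono hx (right_mem_Icc.2 hab) hx.2) hx0
      ((abs_nonneg _).trans (hωV x hx))
  have hωh'i : IntervalIntegrable (fun x => ω' x * h x + ω x * h' x) volume a b := by
    rw [← uIcc_of_le hab] at hω hh
    exact (hω'i.mul_continuousOn hh).add (hh'i.continuousOn_mul hω)
  refine (abs_integral_mul_deriv_le_s4 hab (hω.mul hh) (fun x hx => (hω' x hx).mul (hh' x hx)) hωh'i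
    hr hr' hr'i hωhV
    (integral_abs_deriv_mul_le_of_monotoneOn hab hω hω'i hh hh' hh'i hmono ha hωV hω'V)
    hrM).trans_eq ?_
  ring

theorem abs_integral_mul_le_of_nonneg (hab : a ≤ b) {f g : ℝ → ℝ} {K : ℝ}
    (hf : ContinuousOn f (Icc a b)) (hg : ContinuousOn g (Icc a b)) (hg0 : ∀ x ∈ Icc a b, 0 ≤ g x)
    (hfK : ∀ x ∈ Icc a b, |f x| ≤ K) :
    |∫ x in a..b, f x * g x| ≤ K * ∫ x in a..b, g x :=
  calc |∫ x in a..b, f x * g x|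
      ≤ ∫ x in a..b, K * g x := by
        refine (abs_integral_le_integral_abs hab).trans (integral_mono_on hab
          ((hf.mul hg).abs.intervalIntegrable_of_Icc hab)
          ((hg.intervalIntegrable_of_Icc hab).const_mul K) fun x hx => ?_)
        rw [abs_mul, abs_of_nonneg (hg0 x hx)]
        exact mul_le_mul_of_nonneg_right (hfK x hx) (hg0 x hx)
    _ = K * ∫ x in a..b, g x := integral_const_mul _ _

theorem abs_inv_sq_sub_inv_sq_le {p q p₀ q₀ : ℝ} (hp₀ : 0 < p₀) (hq₀ : 0 < q₀) (hp₀1 : p₀ ≤ 1)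
    (hq₀1 : q₀ ≤ 1) (hp : p₀ ≤ p) (hq : q₀ ≤ q) :
    |(p ^ 2)⁻¹ - (q ^ 2)⁻¹| ≤ 2 / (p₀ * q₀) * |p⁻¹ - q⁻¹| := by
  have hp0 : 0 < p := hp₀.trans_le hp
  have hq0 : 0 < q := hq₀.trans_le hq
  have hfactor : (p ^ 2)⁻¹ - (q ^ 2)⁻¹ = (p⁻¹ + q⁻¹) * (p⁻¹ - q⁻¹) := by ring
  have hsum : p⁻¹ + q⁻¹ ≤ 2 / (p₀ * q₀) :=
    calc p⁻¹ + q⁻¹ ≤ p₀⁻¹ + q₀⁻¹ := add_le_add (inv_anti₀ hp₀ hp) (inv_anti₀ hq₀ hq)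
      _ ≤ 2 / (p₀ * q₀) := by
        rw [inv_add_inv hp₀.ne' hq₀.ne']
        gcongr
        linarith
  rw [hfactor, abs_mul, abs_of_pos (by positivity : 0 < p⁻¹ + q⁻¹)]
  exact mul_le_mul_of_nonneg_right hsum (abs_nonneg _)

theorem abs_integral_mul_inv_sq_mul_deriv_le (hab : a ≤ b) {ω ω' S S' r r' : ℝ → ℝ} {V M : ℝ}
    (hω : ∀ x ∈ Icc a b, HasDerivAt ω (ω' x) x) (hω'c : ContinuousOn ω' (Icc a b))
    (hS : ∀ x ∈ Icc a b, HasDerivAt S (S' x) x) (hS'c : ContinuousOn S' (Icc a b))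
    (hSmono : AntitoneOn S (Icc a b)) (hSb : 0 < S b)
    (hr : ContinuousOn r (Icc a b)) (hr' : ∀ x ∈ Ioo a b, HasDerivAt r (r' x) x)
    (hr'c : ContinuousOn r' (Icc a b))
    (hωV : ∀ x ∈ Icc a b, |ω x| ≤ V) (hω'V : ∫ x in a..b, |ω' x| ≤ V)
    (hrM : ∀ x ∈ Icc a b, |r x| ≤ M) :
    |∫ x in a..b, ω x * (S x ^ 2)⁻¹ * r' x| ≤ 4 * V * (S b ^ 2)⁻¹ * M := by
  have hSc := HasDerivAt.continuousOn hS
  have hSpos : ∀ x ∈ Icc a b, 0 < S x := fun x hx =>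
    hSb.trans_le (hSmono hx (right_mem_Icc.2 hab) hx.2)
  have hS0 : ∀ x ∈ Icc a b, S x ^ 2 ≠ 0 := fun x hx => pow_ne_zero 2 (hSpos x hx).ne'
  have hmono : MonotoneOn (fun x => (S x ^ 2)⁻¹) (Icc a b) := fun x hx y hy hxy => by
    have hSy := hSpos y hy
    have hSyx := hSmono hx hy hxy
    dsimp only
    gcongr
  refine abs_integral_mul_mul_deriv_le_of_monotoneOn hab (HasDerivAt.continuousOn hω)
    (fun x hx => hω x (Ioo_subset_Icc_self hx)) (hω'c.intervalIntegrable_of_Icc hab)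
    ((hSc.pow 2).inv₀ hS0) (h' := fun x => -(2 * S x * S' x) / (S x ^ 2) ^ 2)
    (fun x hx => ?_) ?_ hmono (inv_nonneg.2 (sq_nonneg _)) hr hr'
    (hr'c.intervalIntegrable_of_Icc hab) hωV hω'V hrM
  · have hxI := Ioo_subset_Icc_self hx
    exact (((hS x hxI).fun_pow 2).fun_inv (hS0 x hxI)).congr_deriv (by ring)
  · exact ContinuousOn.intervalIntegrable_of_Icc hab
      (((continuousOn_const.mul hSc).mul hS'c).neg.div ((hSc.pow 2).pow 2)
        fun x hx => pow_ne_zero 2 (hS0 x hx))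

theorem abs_integral_mul_inv_sq_sub_inv_sq_mul_le (hab : a ≤ b) {ω P Q g : ℝ → ℝ} {V M : ℝ}
    (hω : ContinuousOn ω (Icc a b)) (hP : ContinuousOn P (Icc a b))
    (hQ : ContinuousOn Q (Icc a b)) (hPmono : AntitoneOn P (Icc a b))
    (hQmono : AntitoneOn Q (Icc a b)) (hPb : 0 < P b) (hQb : 0 < Q b) (hPb1 : P b ≤ 1)
    (hQb1 : Q b ≤ 1) (hg : ContinuousOn g (Icc a b)) (hg0 : ∀ x ∈ Icc a b, 0 ≤ g x)
    (hgint : ∫ x in a..b, g x ≤ 1) (hωV : ∀ x ∈ Icc a b, |ω x| ≤ V)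
    (hM : ∀ x ∈ Icc a b, |(P x)⁻¹ - (Q x)⁻¹| ≤ M) :
    |∫ x in a..b, ω x * ((P x ^ 2)⁻¹ - (Q x ^ 2)⁻¹) * g x| ≤ 2 * V / (P b * Q b) * M := by
  have hb := right_mem_Icc.2 hab
  have hPle : ∀ x ∈ Icc a b, P b ≤ P x := fun x hx => hPmono hx hb hx.2
  have hQle : ∀ x ∈ Icc a b, Q b ≤ Q x := fun x hx => hQmono hx hb hx.2
  have hK : ∀ x ∈ Icc a b, |ω x * ((P x ^ 2)⁻¹ - (Q x ^ 2)⁻¹)| ≤ V * (2 / (P b * Q b) * M) := by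
    intro x hx
    rw [abs_mul]
    refine mul_le_mul (hωV x hx) ?_ (abs_nonneg _) ((abs_nonneg _).trans (hωV x hx))
    exact (abs_inv_sq_sub_inv_sq_le hPb hQb hPb1 hQb1 (hPle x hx) (hQle x hx)).trans
      (mul_le_mul_of_nonneg_left (hM x hx) (by positivity))
  have hK0 : 0 ≤ V * (2 / (P b * Q b) * M) := (abs_nonneg _).trans (hK b hb)
  have hc : ContinuousOn (fun x => ω x * ((P x ^ 2)⁻¹ - (Q x ^ 2)⁻¹)) (Icc a b) :=
    hω.mul (((hP.pow 2).inv₀ fun x hx => (pow_pos (hPb.trans_le (hPle x hx)) 2).ne').sub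
      ((hQ.pow 2).inv₀ fun x hx => (pow_pos (hQb.trans_le (hQle x hx)) 2).ne'))
  calc _ ≤ V * (2 / (P b * Q b) * M) * ∫ x in a..b, g x :=
        abs_integral_mul_le_of_nonneg hab hc hg hg0 hK
    _ ≤ V * (2 / (P b * Q b) * M) := mul_le_of_le_one_right hK0 hgint
    _ = 2 * V / (P b * Q b) * M := by ring

theorem abs_integral_mul_div_sq_sub_div_sq_le (hab : a ≤ b)
    {ω ω' P Q Q' g₁ g₂ G₁ G₂ : ℝ → ℝ} {V : ℝ}
    (hω : ∀ x ∈ Icc a b, HasDerivAt ω (ω' x) x) (hω'c : ContinuousOn ω' (Icc a b))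
    (hP : ContinuousOn P (Icc a b)) (hPmono : AntitoneOn P (Icc a b)) (hPb : 0 < P b)
    (hPb1 : P b ≤ 1) (hQ : ∀ x ∈ Icc a b, HasDerivAt Q (Q' x) x)
    (hQ'c : ContinuousOn Q' (Icc a b)) (hQmono : AntitoneOn Q (Icc a b)) (hQb : 0 < Q b)
    (hQb1 : Q b ≤ 1) (hg₁ : ContinuousOn g₁ (Icc a b)) (hg₁0 : ∀ x ∈ Icc a b, 0 ≤ g₁ x)
    (hg₁int : ∫ x in a..b, g₁ x ≤ 1) (hg₂ : ContinuousOn g₂ (Icc a b))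
    (hG₁ : ∀ y, G₁ y = ∫ u in a..y, g₁ u) (hG₂ : ∀ y, G₂ y = ∫ u in a..y, g₂ u)
    (hωV : ∀ x ∈ Icc a b, |ω x| ≤ V) (hω'V : ∫ x in a..b, |ω' x| ≤ V) :
    |∫ x in a..b, ω x * (g₁ x / P x ^ 2 - g₂ x / Q x ^ 2)|
      ≤ 4 * V * (Q b ^ 2)⁻¹ * (⨆ y : Icc a b, |G₁ y - G₂ y|)
        + 2 * V / (P b * Q b) * ⨆ y : Icc a b, |(P y)⁻¹ - (Q y)⁻¹| := by
  have hb := right_mem_Icc.2 hab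
  have hωc := HasDerivAt.continuousOn hω
  have hQc := HasDerivAt.continuousOn hQ
  have hGc : ContinuousOn (fun y => G₁ y - G₂ y) (Icc a b) := by
    rw [funext hG₁, funext hG₂]
    exact (continuousOn_integral_right_of_continuousOn hab hg₁).sub
      (continuousOn_integral_right_of_continuousOn hab hg₂)
  have hG' : ∀ x ∈ Ioo a b, HasDerivAt (fun y => G₁ y - G₂ y) (g₁ x - g₂ x) x := fun x hx => by
    rw [funext hG₁, funext hG₂]
    exact (hasDerivAt_integral_right_of_continuousOn hg₁ (left_mem_Icc.2 hab) hx).sub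
      (hasDerivAt_integral_right_of_continuousOn hg₂ (left_mem_Icc.2 hab) hx)
  have hP0 : ∀ x ∈ Icc a b, P x ≠ 0 := fun x hx => (hPb.trans_le (hPmono hx hb hx.2)).ne'
  have hQ0 : ∀ x ∈ Icc a b, Q x ≠ 0 := fun x hx => (hQb.trans_le (hQmono hx hb hx.2)).ne'
  have hinvc : ContinuousOn (fun y => (P y)⁻¹ - (Q y)⁻¹) (Icc a b) :=
    (hP.inv₀ hP0).sub (hQc.inv₀ hQ0)
  have hPsq : ContinuousOn (fun x => (P x ^ 2)⁻¹) (Icc a b) :=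
    (hP.pow 2).inv₀ fun x hx => pow_ne_zero 2 (hP0 x hx)
  have hQsq : ContinuousOn (fun x => (Q x ^ 2)⁻¹) (Icc a b) :=
    (hQc.pow 2).inv₀ fun x hx => pow_ne_zero 2 (hQ0 x hx)
  have hIB : IntervalIntegrable (fun x => ω x * (Q x ^ 2)⁻¹ * (g₁ x - g₂ x)) volume a b :=
    ((hωc.mul hQsq).mul (hg₁.sub hg₂)).intervalIntegrable_of_Icc hab
  have hIC : IntervalIntegrable (fun x => ω x * ((P x ^ 2)⁻¹ - (Q x ^ 2)⁻¹) * g₁ x) volume a b :=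
    ((hωc.mul (hPsq.sub hQsq)).mul hg₁).intervalIntegrable_of_Icc hab
  have hsplit : ∀ x, ω x * (g₁ x / P x ^ 2 - g₂ x / Q x ^ 2)
      = ω x * (Q x ^ 2)⁻¹ * (g₁ x - g₂ x) + ω x * ((P x ^ 2)⁻¹ - (Q x ^ 2)⁻¹) * g₁ x :=
    fun x => by ring
  rw [integral_congr fun x _ => hsplit x, intervalIntegral.integral_add hIB hIC]
  refine (abs_add_le _ _).trans (add_le_add ?_ ?_)
  · exact abs_integral_mul_inv_sq_mul_deriv_le hab hω hω'c hQ hQ'c hQmono hQb hGc hG'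
      (hg₁.sub hg₂) hωV hω'V fun y hy => abs_le_ciSup_abs_of_continuousOn hGc hy
  · exact abs_integral_mul_inv_sq_sub_inv_sq_mul_le hab hωc hP hQc hPmono hQmono hPb hQb hPb1 hQb1
      hg₁ hg₁0 hg₁int hωV fun y hy => abs_le_ciSup_abs_of_continuousOn hinvc hy

theorem continuousOn_truncationWeight_div {S S' g γ : ℝ → ℝ} (hab : a ≤ b)
    (hS : ∀ y ∈ Icc a b, HasDerivAt S (S' y) y)
    (hS0 : ∀ y ∈ Icc a b, S y ≠ 0) (hg : ContinuousOn g (Icc a b))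
    (hγ : ∀ y, γ y = ∫ w in y..b, g w / S w) :
    ContinuousOn (fun y => γ y / S y) (Icc a b) := by
  have hSc := HasDerivAt.continuousOn hS
  have hγc : ContinuousOn γ (Icc a b) := by
    rw [show γ = _ from funext hγ]
    exact continuousOn_integral_left_of_continuousOn hab (hg.div hSc hS0)
  exact hγc.div hSc hS0

theorem continuousOn_truncationWeight_div_deriv {S S' g γ : ℝ → ℝ} (hab : a ≤ b)
    (hS : ∀ y ∈ Icc a b, HasDerivAt S (S' y) y) (hS'c : ContinuousOn S' (Icc a b))
    (hS0 : ∀ y ∈ Icc a b, S y ≠ 0) (hg : ContinuousOn g (Icc a b))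
    (hγ : ∀ y, γ y = ∫ w in y..b, g w / S w) :
    ContinuousOn (fun y => γ y / S y * (-S' y / S y) - g y / S y ^ 2) (Icc a b) := by
  have hSc := HasDerivAt.continuousOn hS
  exact ((continuousOn_truncationWeight_div hab hS hS0 hg hγ).mul (hS'c.neg.div hSc hS0)).sub
    (hg.div (hSc.pow 2) fun y hy => pow_ne_zero 2 (hS0 y hy))

theorem hasDerivAt_truncationWeight_div {S S' g γ : ℝ → ℝ}
    (hS : ∀ y ∈ Icc a b, HasDerivAt S (S' y) y)
    (hS0 : ∀ y ∈ Icc a b, S y ≠ 0) (hg : ContinuousOn g (Icc a b))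
    (hγ : ∀ y, γ y = ∫ w in y..b, g w / S w) {x : ℝ} (hx : x ∈ Ioo a b) :
    HasDerivAt (fun y => γ y / S y) (γ x / S x * (-S' x / S x) - g x / S x ^ 2) x := by
  have hxI := Ioo_subset_Icc_self hx
  have hγ' : HasDerivAt γ (-(g x / S x)) x := by
    rw [show γ = _ from funext hγ]
    exact hasDerivAt_integral_left_of_continuousOn
      (hg.div (HasDerivAt.continuousOn hS) hS0) (right_mem_Icc.2 (hx.1.trans hx.2).le) hx
  refine (hγ'.fun_div (hS x hxI) (hS0 x hxI)).congr_deriv ?_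
  field_simp [hS0 x hxI]
  ring

theorem abs_integral_mul_truncationWeight_hazard_sub_le (hab : a ≤ b)
    {ω ω' S₁ S₁' g₁ γ₁ S₂ S₂' g₂ γ₂ : ℝ → ℝ} {V : ℝ}
    (hω : ∀ x ∈ Icc a b, HasDerivAt ω (ω' x) x) (hω'c : ContinuousOn ω' (Icc a b))
    (hS₁ : ∀ x ∈ Icc a b, HasDerivAt S₁ (S₁' x) x) (hS₁'c : ContinuousOn S₁' (Icc a b))
    (hS₁0 : ∀ x ∈ Icc a b, S₁ x ≠ 0) (hg₁ : ContinuousOn g₁ (Icc a b))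
    (hγ₁ : ∀ y, γ₁ y = ∫ w in y..b, g₁ w / S₁ w)
    (hS₂ : ∀ x ∈ Icc a b, HasDerivAt S₂ (S₂' x) x) (hS₂'c : ContinuousOn S₂' (Icc a b))
    (hS₂0 : ∀ x ∈ Icc a b, S₂ x ≠ 0) (hg₂ : ContinuousOn g₂ (Icc a b))
    (hγ₂ : ∀ y, γ₂ y = ∫ w in y..b, g₂ w / S₂ w)
    (hωV : ∀ x ∈ Icc a b, |ω x| ≤ V) (hω'V : ∫ x in a..b, |ω' x| ≤ V) :
    |(∫ x in a..b, ω x * (γ₁ x / S₁ x * (-S₁' x / S₁ x) - γ₂ x / S₂ x * (-S₂' x / S₂ x)))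
      - ∫ x in a..b, ω x * (g₁ x / S₁ x ^ 2 - g₂ x / S₂ x ^ 2)|
      ≤ 3 * V * ⨆ y : Icc a b, |γ₁ y / S₁ y - γ₂ y / S₂ y| := by
  have hωc := HasDerivAt.continuousOn hω
  set d₁ : ℝ → ℝ := fun x => γ₁ x / S₁ x * (-S₁' x / S₁ x) - g₁ x / S₁ x ^ 2
  set d₂ : ℝ → ℝ := fun x => γ₂ x / S₂ x * (-S₂' x / S₂ x) - g₂ x / S₂ x ^ 2
  have hρc : ContinuousOn (fun x => γ₁ x / S₁ x - γ₂ x / S₂ x) (Icc a b) :=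
    (continuousOn_truncationWeight_div hab hS₁ hS₁0 hg₁ hγ₁).sub
      (continuousOn_truncationWeight_div hab hS₂ hS₂0 hg₂ hγ₂)
  have hdc : ContinuousOn (fun x => d₁ x - d₂ x) (Icc a b) :=
    (continuousOn_truncationWeight_div_deriv hab hS₁ hS₁'c hS₁0 hg₁ hγ₁).sub
      (continuousOn_truncationWeight_div_deriv hab hS₂ hS₂'c hS₂0 hg₂ hγ₂)
  have hId : IntervalIntegrable (fun x => ω x * (d₁ x - d₂ x)) volume a b :=
    (hωc.mul hdc).intervalIntegrable_of_Icc hab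
  have hIg : IntervalIntegrable (fun x => ω x * (g₁ x / S₁ x ^ 2 - g₂ x / S₂ x ^ 2)) volume a b :=
    ContinuousOn.intervalIntegrable_of_Icc hab <| hωc.mul <|
      (hg₁.div ((HasDerivAt.continuousOn hS₁).pow 2) fun x hx => pow_ne_zero 2 (hS₁0 x hx)).sub
        (hg₂.div ((HasDerivAt.continuousOn hS₂).pow 2) fun x hx => pow_ne_zero 2 (hS₂0 x hx))
  have hsplit : ∀ x, ω x * (γ₁ x / S₁ x * (-S₁' x / S₁ x) - γ₂ x / S₂ x * (-S₂' x / S₂ x))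
      = ω x * (d₁ x - d₂ x) + ω x * (g₁ x / S₁ x ^ 2 - g₂ x / S₂ x ^ 2) := fun x => by
    simp only [d₁, d₂]
    ring
  rw [integral_congr fun x _ => hsplit x, intervalIntegral.integral_add hId hIg,
    add_sub_cancel_right]
  refine (abs_integral_mul_deriv_le_s4 hab hωc (fun x hx => hω x (Ioo_subset_Icc_self hx))
    (hω'c.intervalIntegrable_of_Icc hab) hρc
    (fun x hx => (hasDerivAt_truncationWeight_div hS₁ hS₁0 hg₁ hγ₁ hx).sub
      (hasDerivAt_truncationWeight_div hS₂ hS₂0 hg₂ hγ₂ hx))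
    (hdc.intervalIntegrable_of_Icc hab) hωV hω'V
    fun y hy => abs_le_ciSup_abs_of_continuousOn hρc hy).trans_eq ?_
  ring

end

theorem weighted_truncation_hazard_integral_bound_general
    (α β : ℝ) (hαβ : α < β)
    (SP SP' S₀ S₀' gP g₀ ω ω' : ℝ → ℝ)
    (hSP : ∀ y ∈ Icc α β, HasDerivAt SP (SP' y) y)
    (hSP'c : ContinuousOn SP' (Icc α β))
    (hSPmono : AntitoneOn SP (Icc α β))
    (hSPpos : ∀ y ∈ Icc α β, 0 < SP y ∧ SP y ≤ 1)
    (hS₀ : ∀ y ∈ Icc α β, HasDerivAt S₀ (S₀' y) y)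
    (hS₀'c : ContinuousOn S₀' (Icc α β))
    (hS₀mono : AntitoneOn S₀ (Icc α β))
    (hS₀pos : ∀ y ∈ Icc α β, 0 < S₀ y ∧ S₀ y ≤ 1)
    (hgP : ContinuousOn gP (Icc α β)) (hgPnn : ∀ y ∈ Icc α β, 0 ≤ gP y)
    (hg₀ : ContinuousOn g₀ (Icc α β))
    (hgPint : (∫ u in α..β, gP u) ≤ 1)
    (GP G₀ γP γ₀ : ℝ → ℝ)
    (hGP : ∀ y, GP y = ∫ u in α..y, gP u)
    (hG₀ : ∀ y, G₀ y = ∫ u in α..y, g₀ u)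
    (hγP : ∀ y, γP y = ∫ w in y..β, gP w / SP w)
    (hγ₀ : ∀ y, γ₀ y = ∫ w in y..β, g₀ w / S₀ w)
    (hω : ∀ y ∈ Icc α β, HasDerivAt ω (ω' y) y)
    (hω'c : ContinuousOn ω' (Icc α β))
    (v : ℝ)
    (hv : v = max (⨆ y : Icc α β, |ω y.1|) (∫ y in α..β, |ω' y|)) :
    |∫ y in α..β,
        ω y * ((γP y / SP y) * (-(SP' y) / SP y) - (γ₀ y / S₀ y) * (-(S₀' y) / S₀ y))|
      ≤ 3 * v * (⨆ y : Icc α β, |γP y.1 / SP y.1 - γ₀ y.1 / S₀ y.1|)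
        + (5 * v / (S₀ β)^3) * (⨆ y : Icc α β, |GP y.1 - G₀ y.1|)
        + (2 * v / (SP β * S₀ β)) * (⨆ y : Icc α β, |(SP y.1)⁻¹ - (S₀ y.1)⁻¹|) := by
  have hab := hαβ.le
  have hβ : β ∈ Icc α β := right_mem_Icc.2 hab
  have hωv : ∀ y ∈ Icc α β, |ω y| ≤ v := fun y hy =>
    hv ▸ (abs_le_ciSup_abs_of_continuousOn (HasDerivAt.continuousOn hω) hy).trans (le_max_left _ _)
  have hω'v : ∫ y in α..β, |ω' y| ≤ v := hv ▸ le_max_right _ _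
  have hA := abs_integral_mul_truncationWeight_hazard_sub_le hab hω hω'c
    hSP hSP'c (fun y hy => (hSPpos y hy).1.ne') hgP hγP
    hS₀ hS₀'c (fun y hy => (hS₀pos y hy).1.ne') hg₀ hγ₀ hωv hω'v
  have hBC := abs_integral_mul_div_sq_sub_div_sq_le hab hω hω'c (HasDerivAt.continuousOn hSP)
    hSPmono (hSPpos β hβ).1 (hSPpos β hβ).2 hS₀ hS₀'c hS₀mono (hS₀pos β hβ).1 (hS₀pos β hβ).2
    hgP hgPnn hgPint hg₀ hGP hG₀ hωv hω'v
  have hconst : 4 * v * (S₀ β ^ 2)⁻¹ ≤ 5 * v / S₀ β ^ 3 := by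
    have hs := (hS₀pos β hβ).1
    have hs1 := (hS₀pos β hβ).2
    have hv0 : 0 ≤ v := (abs_nonneg _).trans (hωv β hβ)
    calc 4 * v * (S₀ β ^ 2)⁻¹ = 4 * v * S₀ β / S₀ β ^ 3 := by field_simp
      _ ≤ 5 * v / S₀ β ^ 3 := by gcongr ?_ / _; nlinarith
  have hG := mul_le_mul_of_nonneg_right hconst
    (Real.iSup_nonneg fun y : Icc α β => abs_nonneg (GP y - G₀ y))
  have htriangle := sub_le_iff_le_add.1 ((abs_sub_abs_le_abs_sub _ _).trans hA)
  linarith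

/-- Lemma 1(d) with explicit constant: bound on the difference of weighted truncation-hazard
integrals in terms of sup-norm differences of `γ♮/S`, `G`, and `1/S`. -/
theorem weighted_truncation_hazard_integral_bound
    (α β : ℝ) (hα : 0 ≤ α) (hαβ : α < β)
    (SP SP' S₀ S₀' gP g₀ ω ω' : ℝ → ℝ)
    (hSP : ∀ y ∈ Icc α β, HasDerivAt SP (SP' y) y)
    (hSP'c : ContinuousOn SP' (Icc α β))
    (hSPmono : AntitoneOn SP (Icc α β))
    (hSPpos : ∀ y ∈ Icc α β, 0 < SP y ∧ SP y ≤ 1)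
    (hS₀ : ∀ y ∈ Icc α β, HasDerivAt S₀ (S₀' y) y)
    (hS₀'c : ContinuousOn S₀' (Icc α β))
    (hS₀mono : AntitoneOn S₀ (Icc α β))
    (hS₀pos : ∀ y ∈ Icc α β, 0 < S₀ y ∧ S₀ y ≤ 1)
    (hgP : ContinuousOn gP (Icc α β)) (hgPnn : ∀ y ∈ Icc α β, 0 ≤ gP y)
    (hg₀ : ContinuousOn g₀ (Icc α β)) (hg₀nn : ∀ y ∈ Icc α β, 0 ≤ g₀ y)
    (hgPint : (∫ u in α..β, gP u) ≤ 1)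
    (hg₀int : (∫ u in α..β, g₀ u) ≤ 1)
    (GP G₀ γP γ₀ : ℝ → ℝ)
    (hGP : ∀ y, GP y = ∫ u in α..y, gP u)
    (hG₀ : ∀ y, G₀ y = ∫ u in α..y, g₀ u)
    (hγP : ∀ y, γP y = ∫ w in y..β, gP w / SP w)
    (hγ₀ : ∀ y, γ₀ y = ∫ w in y..β, g₀ w / S₀ w)
    (hω : ∀ y ∈ Icc α β, HasDerivAt ω (ω' y) y)
    (hω'c : ContinuousOn ω' (Icc α β))
    (v : ℝ)
    (hv : v = max (⨆ y : Icc α β, |ω y.1|) (∫ y in α..β, |ω' y|)) :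
    |∫ y in α..β,
        ω y * ((γP y / SP y) * (-(SP' y) / SP y) - (γ₀ y / S₀ y) * (-(S₀' y) / S₀ y))|
      ≤ 3 * v * (⨆ y : Icc α β, |γP y.1 / SP y.1 - γ₀ y.1 / S₀ y.1|)
        + (5 * v / (S₀ β)^3) * (⨆ y : Icc α β, |GP y.1 - G₀ y.1|)
        + (2 * v / (SP β * S₀ β)) * (⨆ y : Icc α β, |(SP y.1)⁻¹ - (S₀ y.1)⁻¹|) :=
  weighted_truncation_hazard_integral_bound_general α β hαβ SP SP' S₀ S₀' gP g₀ ω ω' hSP hSP'c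
    hSPmono hSPpos hS₀ hS₀'c hS₀mono hS₀pos hgP hgPnn hg₀ hgPint GP G₀ γP γ₀ hGP hG₀ hγP hγ₀ hω hω'c
    v hv
end

section
/- Let F and G be Borel probability measures on ℝ, let κ be a Markov kernel from ℝ to ℝ, and let μ := F.prod (G ⊗ₘ κ) be the resulting probability measure on ℝ × (ℝ × ℝ), a generic point being written (t,(w,c)). Define h : ℝ → [0,∞] by h(t) := (G ⊗ₘ κ)({(w,c) : w ≤ t and t ≤ c}). Then: (i) for every Borel set A ⊆ ℝ, μ({(t,(w,c)) : t ∈ A, w ≤ t, t ≤ c}) = ∫_A h(t) dF(t); (ii) for every u ∈ ℝ, μ({(t,(w,c)) : w ≤ u, u ≤ t, u ≤ c}) = F([u,∞)) · h(u); and (iii) if B ⊆ ℝ is Borel and for F-almost every t ∈ B one has 0 < h(t) < ∞ and F([t,∞)) > 0, then ∫_B (F([t,∞)) · h(t))⁻¹ dN(t) = ∫_B F([t,∞))⁻¹ dF(t), where N := F.withDensity h. (Identification of the target conditional cumulative hazard from left-truncated right-censored data: the observable hazard measure, built from the uncensored-event subdistribution N and the at-risk probability R(u) = F([u,∞))·h(u),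 coincides with the target hazard measure of F.) -/
open Set MeasureTheory ProbabilityTheory
open scoped ENNReal

/-! Since `T` is independent of `(W, C)`, conditioning on `T = t` turns both the event
`W ≤ T ≤ C` and the at-risk event at `t` into `h t`, the probability that `t` lies in the
observation window `[W, C]`. Hence the uncensored-event subdistribution is `F` with density `h`
and the at-risk probability is `F [t, ∞) * h t`; wherever `0 < h t < ∞` the factor `h t`
cancels in the hazard ratio, leaving the hazard measure `dF / F [t, ∞)` of `F`. -/

namespace MeasureTheory.Measure

variable {α β : Type*} [MeasurableSpace α] [MeasurableSpace β]

theorem prod_apply_fst_preimage_inter (μ : Measure α) (ν : Measure β) [SFinite ν]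
    {A : Set α} (hA : MeasurableSet A) {S : Set (α × β)} (hS : MeasurableSet S) :
    μ.prod ν (Prod.fst ⁻¹' A ∩ S) = ∫⁻ x in A, ν (Prod.mk x ⁻¹' S) ∂μ := by
  rw [prod_apply ((measurable_fst hA).inter hS), ← lintegral_indicator hA]
  congr 1 with x
  by_cases hx : x ∈ A <;> simp [hx, preimage_inter, preimage_preimage]

end MeasureTheory.Measure

theorem setLIntegral_withDensity_inv_mul {α : Type*} [MeasurableSpace α] {μ : Measure α}
    {f g : α → ℝ≥0∞} (hf : Measurable f) (hg : Measurable g) {s : Set α} (hs : MeasurableSet s)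
    (hg_ae : ∀ᵐ x ∂μ, x ∈ s → g x ≠ 0 ∧ g x ≠ ∞) :
    ∫⁻ x in s, (f x * g x)⁻¹ ∂μ.withDensity g = ∫⁻ x in s, (f x)⁻¹ ∂μ := by
  rw [setLIntegral_withDensity_eq_setLIntegral_mul μ hg (by fun_prop) hs]
  refine setLIntegral_congr_fun_ae hs ?_
  filter_upwards [hg_ae] with x hx hxs
  obtain ⟨hg0, hgtop⟩ := hx hxs
  rw [Pi.mul_apply, ENNReal.mul_inv (Or.inr hgtop) (Or.inr hg0), mul_left_comm,
    ENNReal.mul_inv_cancel hg0 hgtop, mul_one]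

section ObservationWindow

variable {α : Type*} [MeasurableSpace α] [TopologicalSpace α] [OpensMeasurableSpace α]
  [PartialOrder α] [OrderClosedTopology α] [SecondCountableTopology α]

theorem measurableSet_snd_fst_le_fst_le_snd_snd :
    MeasurableSet {q : α × α × α | q.2.1 ≤ q.1 ∧ q.1 ≤ q.2.2} :=
  (measurableSet_le (measurable_fst.comp measurable_snd) measurable_fst).inter
    (measurableSet_le measurable_fst (measurable_snd.comp measurable_snd))

theorem measurable_measure_fst_le_le_snd (ν : Measure (α × α)) [SFinite ν] :
    Measurable fun t : α => ν {p : α × α | p.1 ≤ t ∧ t ≤ p.2} :=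
  measurable_measure_prodMk_left measurableSet_snd_fst_le_fst_le_snd_snd

end ObservationWindow

theorem hazard_identification_left_truncation_right_censoring_general
    (F G : Measure ℝ)
    (κ : Kernel ℝ ℝ)
    (μ : Measure (ℝ × ℝ × ℝ)) (hμ : μ = F.prod (G ⊗ₘ κ))
    (h : ℝ → ℝ≥0∞)
    (hh : ∀ t, h t = (G ⊗ₘ κ) {p : ℝ × ℝ | p.1 ≤ t ∧ t ≤ p.2}) :
    (∀ A : Set ℝ, MeasurableSet A →
        μ {q : ℝ × ℝ × ℝ | q.1 ∈ A ∧ q.2.1 ≤ q.1 ∧ q.1 ≤ q.2.2}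
          = ∫⁻ t in A, h t ∂F)
    ∧ (∀ u : ℝ,
        μ {q : ℝ × ℝ × ℝ | q.2.1 ≤ u ∧ u ≤ q.1 ∧ u ≤ q.2.2}
          = F (Ici u) * h u)
    ∧ (∀ B : Set ℝ, MeasurableSet B →
        (∀ᵐ t ∂F, t ∈ B → 0 < h t ∧ h t < ⊤ ∧ 0 < F (Ici t)) →
        ∫⁻ t in B, (F (Ici t) * h t)⁻¹ ∂(F.withDensity h)
          = ∫⁻ t in B, (F (Ici t))⁻¹ ∂F) := by
  obtain rfl : h = fun t => (G ⊗ₘ κ) {p : ℝ × ℝ | p.1 ≤ t ∧ t ≤ p.2} := funext hh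
  subst hμ
  refine ⟨fun A hA => F.prod_apply_fst_preimage_inter _ hA
    measurableSet_snd_fst_le_fst_le_snd_snd, fun u => ?_, fun B hB hB_pos => ?_⟩
  · have at_risk_eq_prod : {q : ℝ × ℝ × ℝ | q.2.1 ≤ u ∧ u ≤ q.1 ∧ u ≤ q.2.2}
        = Ici u ×ˢ {p : ℝ × ℝ | p.1 ≤ u ∧ u ≤ p.2} := by
      ext q; simp only [mem_ofPred_eq, mem_prod, mem_Ici]; tauto
    rw [at_risk_eq_prod, Measure.prod_prod]
  · have hF_Ici : Measurable fun t => F (Ici t) :=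
      Antitone.measurable fun _ _ hst => measure_mono (Ici_subset_Ici.mpr hst)
    refine setLIntegral_withDensity_inv_mul hF_Ici (measurable_measure_fst_le_le_snd _) hB ?_
    filter_upwards [hB_pos] with t ht htB
    exact ⟨(ht htB).1.ne', (ht htB).2.1.ne⟩

/-- Identification of the target conditional cumulative hazard from left-truncated
right-censored data: with `μ = F.prod (G ⊗ₘ κ)`, `h t = (G ⊗ₘ κ) {(w,c) : w ≤ t ∧ t ≤ c}`,
(i) the uncensored-event subdistribution has `F`-density `h`; (ii) the at-risk probability at
`u` is `F [u,∞) * h u`; and (iii) the observable hazard measure equals the target hazard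
measure of `F`. -/
theorem hazard_identification_left_truncation_right_censoring
    (F G : Measure ℝ) [IsProbabilityMeasure F] [IsProbabilityMeasure G]
    (κ : Kernel ℝ ℝ) [IsMarkovKernel κ]
    (μ : Measure (ℝ × ℝ × ℝ)) (hμ : μ = F.prod (G ⊗ₘ κ))
    (h : ℝ → ℝ≥0∞)
    (hh : ∀ t, h t = (G ⊗ₘ κ) {p : ℝ × ℝ | p.1 ≤ t ∧ t ≤ p.2}) :
    (∀ A : Set ℝ, MeasurableSet A →
        μ {q : ℝ × ℝ × ℝ | q.1 ∈ A ∧ q.2.1 ≤ q.1 ∧ q.1 ≤ q.2.2}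
          = ∫⁻ t in A, h t ∂F)
    ∧ (∀ u : ℝ,
        μ {q : ℝ × ℝ × ℝ | q.2.1 ≤ u ∧ u ≤ q.1 ∧ u ≤ q.2.2}
          = F (Ici u) * h u)
    ∧ (∀ B : Set ℝ, MeasurableSet B →
        (∀ᵐ t ∂F, t ∈ B → 0 < h t ∧ h t < ⊤ ∧ 0 < F (Ici t)) →
        ∫⁻ t in B, (F (Ici t) * h t)⁻¹ ∂(F.withDensity h)
          = ∫⁻ t in B, (F (Ici t))⁻¹ ∂F) :=
  hazard_identification_left_truncation_right_censoring_general F G κ μ hμ h hh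
end

section
/- Let F and G be Borel probability measures on ℝ, write S(w) := F([w,∞)), and set c := ∫ S(w) dG(w); assume 0 < c. Define the observable truncation distribution G₀ := c⁻¹ • (G.withDensity S). Then: (i) for every Borel set A ⊆ ℝ, (F.prod G)({(t,w) : w ∈ A and w ≤ t}) = ∫_A S(w) dG(w), so in particular (F.prod G)({(t,w) : w ≤ t}) = c; and (ii) if S(w) > 0 for G-almost every w, then ∫ S(w)⁻¹ dG₀(w) = c⁻¹ and, for every Borel set A ⊆ ℝ, G(A) = c · ∫_A S(w)⁻¹ dG₀(w). (Identification of the target truncation distribution by inverse-probability-of-survival reweighting of the observable truncation distribution, with normalizing constant γ = 1/P(T ≥ W).) -/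
open Set MeasureTheory
open scoped ENNReal

/-! By Tonelli, slicing `{(t, w) : w ∈ A, w ≤ t}` at a fixed truncation time `w` leaves the event
`T ≥ w` of `F`-probability `S w`, which gives (i). For (ii), `G₀` has density `c⁻¹ S` with respect
to `G`, and `S` is a.e. positive and finite, so reweighting `G₀` by `S⁻¹` recovers `c⁻¹ • G`. -/

section SurvivalFunction

variable {α : Type*} [LinearOrder α] [TopologicalSpace α] [OrderClosedTopology α]
  [MeasurableSpace α] [BorelSpace α]

theorem measurable_measure_Ici (μ : Measure α) : Measurable fun w => μ (Ici w) :=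
  Antitone.measurable fun _ _ hab => measure_mono (Ici_subset_Ici.mpr hab)

theorem MeasureTheory.Measure.prod_apply_setOf_snd_mem_le [SecondCountableTopology α]
    (μ ν : Measure α) [SFinite μ] [SFinite ν] {A : Set α} (hA : MeasurableSet A) :
    μ.prod ν {p : α × α | p.2 ∈ A ∧ p.2 ≤ p.1} = ∫⁻ w in A, μ (Ici w) ∂ν := by
  have hmeas : MeasurableSet {p : α × α | p.2 ∈ A ∧ p.2 ≤ p.1} :=
    (measurable_snd hA).inter (measurableSet_le measurable_snd measurable_fst)
  have hslice : ∀ w, μ ((fun t => (t, w)) ⁻¹' {p : α × α | p.2 ∈ A ∧ p.2 ≤ p.1})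
      = A.indicator (fun w => μ (Ici w)) w := by
    intro w
    by_cases hw : w ∈ A
    · rw [indicator_of_mem hw]
      congr 1
      ext t
      simp [hw]
    · simp [hw]
  simp only [Measure.prod_apply_symm hmeas, hslice, lintegral_indicator hA]

end SurvivalFunction

theorem withDensity_inv_smul_withDensity {α : Type*} [MeasurableSpace α] {μ : Measure α}
    {f : α → ℝ≥0∞} (hf : Measurable f) (hf_ne_zero : ∀ᵐ x ∂μ, f x ≠ 0)
    (hf_ne_top : ∀ᵐ x ∂μ, f x ≠ ∞) (r : ℝ≥0∞) :
    (r • μ.withDensity f).withDensity (fun x => (f x)⁻¹) = r • μ := by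
  rw [withDensity_smul_measure, withDensity_inv_same hf hf_ne_zero hf_ne_top]

/-- Identification of the target truncation distribution by inverse-probability-of-survival
reweighting of the observable truncation distribution `G₀ = c⁻¹ • (G.withDensity S)`,
where `S w = F [w,∞)` and `c = ∫ S dG = P(T ≥ W)`. -/
theorem truncation_distribution_identification
    (F G : Measure ℝ) [IsProbabilityMeasure F] [IsProbabilityMeasure G]
    (S : ℝ → ℝ≥0∞) (hS : ∀ w, S w = F (Ici w))
    (c : ℝ≥0∞) (hc : c = ∫⁻ w, S w ∂G) (hcpos : 0 < c)
    (G₀ : Measure ℝ) (hG₀ : G₀ = c⁻¹ • (G.withDensity S)) :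
    ((∀ A : Set ℝ, MeasurableSet A →
        (F.prod G) {p : ℝ × ℝ | p.2 ∈ A ∧ p.2 ≤ p.1} = ∫⁻ w in A, S w ∂G)
      ∧ (F.prod G) {p : ℝ × ℝ | p.2 ≤ p.1} = c)
    ∧ ((∀ᵐ w ∂G, 0 < S w) →
        (∫⁻ w, (S w)⁻¹ ∂G₀) = c⁻¹
        ∧ ∀ A : Set ℝ, MeasurableSet A →
            G A = c * ∫⁻ w in A, (S w)⁻¹ ∂G₀) := by
  obtain rfl : S = fun w => F (Ici w) := funext hS
  have hc_le_one : c ≤ 1 :=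
    hc ▸ (lintegral_mono fun _ => prob_le_one).trans_eq (by simp)
  refine ⟨⟨fun A hA => F.prod_apply_setOf_snd_mem_le G hA, ?_⟩, fun hpos => ?_⟩
  · simpa [hc] using F.prod_apply_setOf_snd_mem_le G MeasurableSet.univ
  have hreweight : G₀.withDensity (fun w => (F (Ici w))⁻¹) = c⁻¹ • G :=
    hG₀ ▸ withDensity_inv_smul_withDensity (measurable_measure_Ici F)
      (hpos.mono fun _ h => h.ne') (ae_of_all _ fun _ => measure_ne_top _ _) _
  refine ⟨?_, fun A hA => ?_⟩
  · rw [← setLIntegral_univ, ← withDensity_apply _ MeasurableSet.univ, hreweight]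
    simp
  · rw [← withDensity_apply _ hA, hreweight, Measure.smul_apply, smul_eq_mul, ← mul_assoc,
      ENNReal.mul_inv_cancel hcpos.ne' (hc_le_one.trans_lt ENNReal.one_lt_top).ne, one_mul]
end

section
/- Let 0 ≤ α < β be real numbers, let S be a C¹ survival function on [α,β] with hazard rate λ := −S'/S, let φ : ℝ → ℝ be continuously differentiable on [α,β], and set L(y) := ∫_y^β S(u) φ'(u) du. Then for all α ≤ w ≤ y ≤ β: (i) ∫_w^y L(u) λ(u)/S(u) du = L(y)/S(y) − L(w)/S(w) + φ(y) − φ(w); and consequently (ii) |∫_w^y L(u) λ(u)/S(u) du| ≤ 2 sup_{u∈[w,y]} |L(u)/S(u)| + ∫_w^y |φ'(u)| du, and if φ is nondecreasing on [α,β] then 0 ≤ ∫_w^y L(u) λ(u)/S(u) du ≤ 2 sup_{u∈[w,y]} |L(u)/S(u)| + (φ(y) − φ(w)). -/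
/-! Since `L' = -S φ'`, the quotient rule gives `(L/S + φ)' = -φ' - L S'/S² + φ' = L λ / S`, so
the integral in (i) is the increment of `L/S + φ` by the fundamental theorem of calculus.
The bounds follow from the triangle inequality and `|φ y - φ w| ≤ ∫_w^y |φ'|`; when `φ` is
nondecreasing, `φ' ≥ 0`, hence `L ≥ 0`, and `λ ≥ 0` because `S` is nonincreasing. -/

open Set intervalIntegral MeasureTheory

section Interval

variable {f : ℝ → ℝ} {a b : ℝ}

lemma preperfect_Icc (hab : a < b) : Preperfect (Icc a b) :=
  isPreconnected_Icc.preperfect_of_nontrivial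
    ⟨a, left_mem_Icc.2 hab.le, b, right_mem_Icc.2 hab.le, hab.ne⟩

lemma HasDerivAt.nonneg_of_monotoneOn_Icc {f' x : ℝ} (hab : a < b) (hx : x ∈ Icc a b)
    (hf : HasDerivAt f f' x) (hmono : MonotoneOn f (Icc a b)) : 0 ≤ f' :=
  hf.hasDerivWithinAt.nonneg_of_monotoneOn (preperfect_Icc hab x hx) hmono

lemma ContinuousOn.continuousOn_integral_left (hf : ContinuousOn f (Icc a b)) :
    ContinuousOn (fun x => ∫ t in x..b, f t) (Icc a b) := by
  rcases le_or_gt a b with hab | hba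
  · rw [← uIcc_of_le hab] at hf ⊢
    exact continuousOn_primitive_interval_left hf.integrableOn_uIcc
  · simp [Icc_eq_empty_of_lt hba]

lemma ContinuousOn.hasDerivAt_integral_left (hf : ContinuousOn f (Icc a b)) {x : ℝ}
    (hx : x ∈ Ioo a b) : HasDerivAt (fun x => ∫ t in x..b, f t) (-f x) x :=
  integral_hasDerivAt_left
    ((hf.mono (Icc_subset_Icc_left hx.1.le)).intervalIntegrable_of_Icc hx.2.le)
    ((hf.mono Ioo_subset_Icc_self).stronglyMeasurableAtFilter isOpen_Ioo x hx)
    (hf.continuousAt (Icc_mem_nhds hx.1 hx.2))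

lemma abs_sub_le_integral_abs_deriv {φ φ' : ℝ → ℝ} (hab : a ≤ b)
    (hφ : ∀ x ∈ Icc a b, HasDerivAt φ (φ' x) x) (hφ' : ContinuousOn φ' (Icc a b)) :
    |φ b - φ a| ≤ ∫ x in a..b, |φ' x| := by
  rw [← integral_eq_sub_of_hasDerivAt (fun x hx => hφ x (by rwa [uIcc_of_le hab] at hx))
    (hφ'.intervalIntegrable_of_Icc hab)]
  exact abs_integral_le_integral_abs hab

lemma le_ciSup_Icc_of_continuousOn (hf : ContinuousOn f (Icc a b)) {x : ℝ} (hx : x ∈ Icc a b) :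
    f x ≤ ⨆ u : Icc a b, f u :=
  le_ciSup (f := fun u : Icc a b => f u)
    (by rw [← image_eq_range]; exact isCompact_Icc.bddAbove_image hf) ⟨x, hx⟩

end Interval

section Hazard

variable {L S S' φ φ' : ℝ → ℝ} {w y x : ℝ}

lemma hasDerivAt_div_add (hL : HasDerivAt L (-(S x * φ' x)) x) (hS : HasDerivAt S (S' x) x)
    (hS0 : S x ≠ 0) (hφ : HasDerivAt φ (φ' x) x) :
    HasDerivAt (fun u => L u / S u + φ u) (L x * (-(S' x) / S x) / S x) x := by
  refine ((hL.div hS hS0).add hφ).congr_deriv ?_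
  field_simp
  ring

theorem integral_mul_hazard_div_eq (hwy : w ≤ y) (hLc : ContinuousOn L (Icc w y))
    (hL : ∀ x ∈ Ioo w y, HasDerivAt L (-(S x * φ' x)) x)
    (hS : ∀ x ∈ Icc w y, HasDerivAt S (S' x) x) (hS'c : ContinuousOn S' (Icc w y))
    (hS0 : ∀ x ∈ Icc w y, S x ≠ 0) (hφ : ∀ x ∈ Icc w y, HasDerivAt φ (φ' x) x) :
    ∫ u in w..y, L u * (-(S' u) / S u) / S u = L y / S y - L w / S w + φ y - φ w := by
  have hSc : ContinuousOn S (Icc w y) := fun x hx => (hS x hx).continuousAt.continuousWithinAt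
  have hφc : ContinuousOn φ (Icc w y) := fun x hx => (hφ x hx).continuousAt.continuousWithinAt
  rw [integral_eq_sub_of_hasDeriv_right_of_le hwy ((hLc.div hSc hS0).add hφc)
    (fun x hx => (hasDerivAt_div_add (hL x hx) (hS x (Ioo_subset_Icc_self hx))
      (hS0 x (Ioo_subset_Icc_self hx)) (hφ x (Ioo_subset_Icc_self hx))).hasDerivWithinAt)
    (((hLc.mul (hS'c.neg.div hSc hS0)).div hSc hS0).intervalIntegrable_of_Icc hwy)]
  simp only [Pi.add_apply, Pi.div_apply]
  ring

lemma integral_mul_hazard_div_nonneg (hwy : w ≤ y) (hL : ∀ x ∈ Icc w y, 0 ≤ L x)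
    (hS : ∀ x ∈ Icc w y, 0 < S x) (hS' : ∀ x ∈ Icc w y, 0 ≤ -S' x) :
    0 ≤ ∫ u in w..y, L u * (-(S' u) / S u) / S u :=
  integral_nonneg hwy fun u hu =>
    div_nonneg (mul_nonneg (hL u hu) (div_nonneg (hS' u hu) (hS u hu).le)) (hS u hu).le

end Hazard

theorem kernel_hazard_integral_identity_and_bound_general
    (α β : ℝ) (hαβ : α < β)
    (S S' φ φ' : ℝ → ℝ)
    (hS : ∀ y ∈ Icc α β, HasDerivAt S (S' y) y)
    (hS'c : ContinuousOn S' (Icc α β))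
    (hSmono : AntitoneOn S (Icc α β))
    (hSpos : ∀ y ∈ Icc α β, 0 < S y ∧ S y ≤ 1)
    (hφ : ∀ y ∈ Icc α β, HasDerivAt φ (φ' y) y)
    (hφ'c : ContinuousOn φ' (Icc α β))
    (L : ℝ → ℝ) (hL : ∀ y, L y = ∫ u in y..β, S u * φ' u) :
    ∀ w y : ℝ, α ≤ w → w ≤ y → y ≤ β →
      ((∫ u in w..y, L u * (-(S' u) / S u) / S u)
          = L y / S y - L w / S w + φ y - φ w)
      ∧ (|∫ u in w..y, L u * (-(S' u) / S u) / S u|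
          ≤ 2 * (⨆ u : Icc w y, |L u.1 / S u.1|) + ∫ u in w..y, |φ' u|)
      ∧ (MonotoneOn φ (Icc α β) →
          0 ≤ (∫ u in w..y, L u * (-(S' u) / S u) / S u)
          ∧ (∫ u in w..y, L u * (-(S' u) / S u) / S u)
              ≤ 2 * (⨆ u : Icc w y, |L u.1 / S u.1|) + (φ y - φ w)) := by
  intro w y hw hwy hy
  have hsub : Icc w y ⊆ Icc α β := Icc_subset_Icc hw hy
  have hS0 : ∀ x ∈ Icc α β, S x ≠ 0 := fun x hx => (hSpos x hx).1.ne'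
  have hSc : ContinuousOn S (Icc α β) := fun x hx => (hS x hx).continuousAt.continuousWithinAt
  have hSφ' : ContinuousOn (fun u => S u * φ' u) (Icc α β) := hSc.mul hφ'c
  have hLeq : L = fun x => ∫ u in x..β, S u * φ' u := funext hL
  have hLc : ContinuousOn L (Icc α β) := hLeq ▸ hSφ'.continuousOn_integral_left
  have hident := integral_mul_hazard_div_eq hwy (hLc.mono hsub)
    (fun x hx => hLeq ▸ hSφ'.hasDerivAt_integral_left (Ioo_subset_Ioo hw hy hx))
    (fun x hx => hS x (hsub hx)) (hS'c.mono hsub) (fun x hx => hS0 x (hsub hx))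
    (fun x hx => hφ x (hsub hx))
  have hsup : ∀ u ∈ Icc w y, |L u / S u| ≤ ⨆ v : Icc w y, |L v.1 / S v.1| := fun u hu =>
    le_ciSup_Icc_of_continuousOn (f := fun u => |L u / S u|) ((hLc.div hSc hS0).abs.mono hsub) hu
  have hy_sup := hsup y (right_mem_Icc.2 hwy)
  have hw_sup := hsup w (left_mem_Icc.2 hwy)
  refine ⟨hident, ?_, fun hmon => ⟨?_, ?_⟩⟩
  · have hφ_le := abs_sub_le_integral_abs_deriv hwy (fun x hx => hφ x (hsub hx)) (hφ'c.mono hsub)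
    rw [hident]
    calc |L y / S y - L w / S w + φ y - φ w|
        = |L y / S y + -(L w / S w) + (φ y - φ w)| := by congr 1; ring
      _ ≤ |L y / S y| + |-(L w / S w)| + |φ y - φ w| := abs_add_three _ _ _
      _ ≤ _ := by rw [abs_neg]; linarith
  · refine integral_mul_hazard_div_nonneg hwy (fun x hx => ?_) (fun x hx => (hSpos x (hsub hx)).1)
      (fun x hx => (hS x (hsub hx)).neg.nonneg_of_monotoneOn_Icc hαβ (hsub hx) hSmono.neg)
    obtain ⟨hαx, hxβ⟩ := hsub hx
    rw [hL]
    refine integral_nonneg hxβ fun t ht => ?_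
    have ht' : t ∈ Icc α β := ⟨hαx.trans ht.1, ht.2⟩
    exact mul_nonneg (hSpos t ht').1.le ((hφ t ht').nonneg_of_monotoneOn_Icc hαβ ht' hmon)
  · rw [hident]
    linarith [le_abs_self (L y / S y), neg_abs_le (L w / S w)]

/-- Key identity and bounds for `∫_w^y L(u) λ(u)/S(u) du` where `L y = ∫_y^β S φ'` and
`λ = -S'/S`: (i) it equals `L y/S y - L w/S w + φ y - φ w`; (ii) it is bounded by
`2 sup |L/S| + ∫ |φ'|`, and if `φ` is nondecreasing, it lies in
`[0, 2 sup |L/S| + (φ y - φ w)]`. -/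
theorem kernel_hazard_integral_identity_and_bound
    (α β : ℝ) (hα : 0 ≤ α) (hαβ : α < β)
    (S S' φ φ' : ℝ → ℝ)
    (hS : ∀ y ∈ Icc α β, HasDerivAt S (S' y) y)
    (hS'c : ContinuousOn S' (Icc α β))
    (hSmono : AntitoneOn S (Icc α β))
    (hSpos : ∀ y ∈ Icc α β, 0 < S y ∧ S y ≤ 1)
    (hφ : ∀ y ∈ Icc α β, HasDerivAt φ (φ' y) y)
    (hφ'c : ContinuousOn φ' (Icc α β))
    (L : ℝ → ℝ) (hL : ∀ y, L y = ∫ u in y..β, S u * φ' u) :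
    ∀ w y : ℝ, α ≤ w → w ≤ y → y ≤ β →
      ((∫ u in w..y, L u * (-(S' u) / S u) / S u)
          = L y / S y - L w / S w + φ y - φ w)
      ∧ (|∫ u in w..y, L u * (-(S' u) / S u) / S u|
          ≤ 2 * (⨆ u : Icc w y, |L u.1 / S u.1|) + ∫ u in w..y, |φ' u|)
      ∧ (MonotoneOn φ (Icc α β) →
          0 ≤ (∫ u in w..y, L u * (-(S' u) / S u) / S u)
          ∧ (∫ u in w..y, L u * (-(S' u) / S u) / S u)
              ≤ 2 * (⨆ u : Icc w y, |L u.1 / S u.1|) + (φ y - φ w)) :=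
  kernel_hazard_integral_identity_and_bound_general α β hαβ S S' φ φ' hS hS'c hSmono hSpos hφ hφ'c L
    hL
end

section
/- Let 0 < β be a real number, let S₁ and S₂ be C¹ survival functions on [0,β] with S₁(0) = S₂(0) = 1, with densities f₁ := −S₁', f₂ := −S₂', and let φ : ℝ → ℝ be continuously differentiable on [0,β]. Set L₁(y) := ∫_y^β S₁(u) φ'(u) du and L₂(y) := ∫_y^β S₂(u) φ'(u) du. Then |∫₀^β φ(y)(f₁(y) − f₂(y)) dy + φ(β)(S₁(β) − S₂(β))| ≤ 4 · sup_{y∈[0,β]} |L₁(y)/S₁(y) − L₂(y)/S₂(y)|. (The survival-integral difference bound used to control |μ_{n,k}(z) − μ_∞(z)| in the proof of Theorem 2.) -/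
open Set intervalIntegral

/-- The survival-integral difference bound: for C¹ survival functions `S₁, S₂` on `[0,β]`
with `S₁ 0 = S₂ 0 = 1` and a C¹ kernel `φ`,
`|∫ φ dF₁ - ∫ φ dF₂| ≤ 4 sup_{[0,β]} |L₁/S₁ - L₂/S₂|`
where `L_i y = ∫_y^β S_i φ'` and the left side includes the boundary term
`φ β (S₁ β - S₂ β)`. -/
theorem survival_integral_difference_bound
    (β : ℝ) (hβ : 0 < β)
    (S₁ S₁' S₂ S₂' φ φ' : ℝ → ℝ)
    (hS₁ : ∀ y ∈ Icc (0:ℝ) β, HasDerivAt S₁ (S₁' y) y)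
    (hS₁'c : ContinuousOn S₁' (Icc 0 β))
    (hS₁mono : AntitoneOn S₁ (Icc 0 β))
    (hS₁pos : ∀ y ∈ Icc (0:ℝ) β, 0 < S₁ y ∧ S₁ y ≤ 1)
    (hS₂ : ∀ y ∈ Icc (0:ℝ) β, HasDerivAt S₂ (S₂' y) y)
    (hS₂'c : ContinuousOn S₂' (Icc 0 β))
    (hS₂mono : AntitoneOn S₂ (Icc 0 β))
    (hS₂pos : ∀ y ∈ Icc (0:ℝ) β, 0 < S₂ y ∧ S₂ y ≤ 1)
    (hS₁0 : S₁ 0 = 1) (hS₂0 : S₂ 0 = 1)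
    (hφ : ∀ y ∈ Icc (0:ℝ) β, HasDerivAt φ (φ' y) y)
    (hφ'c : ContinuousOn φ' (Icc 0 β))
    (L₁ L₂ : ℝ → ℝ)
    (hL₁ : ∀ y, L₁ y = ∫ u in y..β, S₁ u * φ' u)
    (hL₂ : ∀ y, L₂ y = ∫ u in y..β, S₂ u * φ' u) :
    |(∫ y in (0:ℝ)..β, φ y * ((-(S₁' y)) - (-(S₂' y)))) + φ β * (S₁ β - S₂ β)|
      ≤ 4 * ⨆ y : Icc (0:ℝ) β, |L₁ y.1 / S₁ y.1 - L₂ y.1 / S₂ y.1| := by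

  have hφc : ContinuousOn φ (Icc 0 β) := fun y hy => (hφ y hy).continuousAt.continuousWithinAt
  have hS₁c : ContinuousOn S₁ (Icc 0 β) := fun y hy => (hS₁ y hy).continuousAt.continuousWithinAt
  have hS₂c : ContinuousOn S₂ (Icc 0 β) := fun y hy => (hS₂ y hy).continuousAt.continuousWithinAt
  have huIcc : uIcc (0:ℝ) β = Icc 0 β := uIcc_of_le hβ.le
  have hmem : ∀ x ∈ uIcc (0:ℝ) β, x ∈ Icc (0:ℝ) β := by rw [huIcc]; exact fun x h => h
  have int_φS₁' : IntervalIntegrable (fun y => φ y * S₁' y) MeasureTheory.volume 0 β :=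
    (hφc.mul hS₁'c).intervalIntegrable_of_Icc hβ.le
  have int_φS₂' : IntervalIntegrable (fun y => φ y * S₂' y) MeasureTheory.volume 0 β :=
    (hφc.mul hS₂'c).intervalIntegrable_of_Icc hβ.le
  have ibp1 : ∫ y in (0:ℝ)..β, φ y * S₁' y
      = φ β * S₁ β - φ 0 * S₁ 0 - ∫ y in (0:ℝ)..β, φ' y * S₁ y :=
    integral_mul_deriv_eq_deriv_mul (fun x hx => hφ x (hmem x hx))
      (fun x hx => hS₁ x (hmem x hx))
      (hφ'c.intervalIntegrable_of_Icc hβ.le) (hS₁'c.intervalIntegrable_of_Icc hβ.le)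
  have ibp2 : ∫ y in (0:ℝ)..β, φ y * S₂' y
      = φ β * S₂ β - φ 0 * S₂ 0 - ∫ y in (0:ℝ)..β, φ' y * S₂ y :=
    integral_mul_deriv_eq_deriv_mul (fun x hx => hφ x (hmem x hx))
      (fun x hx => hS₂ x (hmem x hx))
      (hφ'c.intervalIntegrable_of_Icc hβ.le) (hS₂'c.intervalIntegrable_of_Icc hβ.le)
  have key : (∫ y in (0:ℝ)..β, φ y * ((-(S₁' y)) - (-(S₂' y)))) + φ β * (S₁ β - S₂ β)
      = L₁ 0 - L₂ 0 := by
    have hsplit : (∫ y in (0:ℝ)..β, φ y * ((-(S₁' y)) - (-(S₂' y))))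
        = (∫ y in (0:ℝ)..β, φ y * S₂' y) - ∫ y in (0:ℝ)..β, φ y * S₁' y := by
      rw [← intervalIntegral.integral_sub int_φS₂' int_φS₁']
      apply intervalIntegral.integral_congr
      intro x _; ring
    have h1 : (∫ u in (0:ℝ)..β, S₁ u * φ' u) = ∫ y in (0:ℝ)..β, φ' y * S₁ y :=
      intervalIntegral.integral_congr (fun x _ => mul_comm _ _)
    have h2 : (∫ u in (0:ℝ)..β, S₂ u * φ' u) = ∫ y in (0:ℝ)..β, φ' y * S₂ y :=
      intervalIntegral.integral_congr (fun x _ => mul_comm _ _)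
    rw [hsplit, ibp1, ibp2, hL₁ 0, hL₂ 0, hS₁0, hS₂0, h1, h2]
    ring
  obtain ⟨C, hC⟩ := isCompact_Icc.exists_bound_of_continuousOn hφ'c
  have h0mem : (0:ℝ) ∈ Icc (0:ℝ) β := ⟨le_refl _, hβ.le⟩
  have hβmem : β ∈ Icc (0:ℝ) β := ⟨hβ.le, le_refl _⟩
  have hC0 : 0 ≤ C := le_trans (norm_nonneg _) (hC 0 h0mem)
  have hLbound : ∀ (S L : ℝ → ℝ), (∀ y ∈ Icc (0:ℝ) β, 0 < S y ∧ S y ≤ 1) →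
      (∀ y, L y = ∫ u in y..β, S u * φ' u) →
      ∀ y ∈ Icc (0:ℝ) β, |L y| ≤ C * β := by
    intro S L hSpos hL y hy
    rw [hL y]
    have hb : ‖∫ u in y..β, S u * φ' u‖ ≤ C * |β - y| := by
      apply intervalIntegral.norm_integral_le_of_norm_le_const
      intro x hx
      have hx' : x ∈ Icc (0:ℝ) β := by
        rw [uIoc_of_le hy.2] at hx
        exact ⟨le_trans hy.1 hx.1.le, hx.2⟩
      have h1 : |S x| ≤ 1 := by
        rw [abs_of_pos (hSpos x hx').1]; exact (hSpos x hx').2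
      calc ‖S x * φ' x‖ = |S x| * |φ' x| := abs_mul _ _
        _ ≤ 1 * C := mul_le_mul h1 (hC x hx') (abs_nonneg _) zero_le_one
        _ = C := one_mul C
    refine hb.trans (mul_le_mul_of_nonneg_left ?_ hC0)
    rw [abs_of_nonneg (by linarith [hy.2])]
    linarith [hy.1]
  have hqbound : ∀ (S S' L : ℝ → ℝ), (∀ y ∈ Icc (0:ℝ) β, 0 < S y ∧ S y ≤ 1) →
      AntitoneOn S (Icc 0 β) →
      (∀ y, L y = ∫ u in y..β, S u * φ' u) →
      ∀ y ∈ Icc (0:ℝ) β, |L y / S y| ≤ C * β / S β := by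
    intro S S' L hSpos hSmono hL y hy
    rw [abs_div, abs_of_pos (hSpos y hy).1]
    exact div_le_div₀ (mul_nonneg hC0 hβ.le) (hLbound S L hSpos hL y hy)
      (hSpos β hβmem).1 (hSmono hy hβmem hy.2)
  set B : ℝ := C * β / S₁ β + C * β / S₂ β with hB
  have hbdd : BddAbove (range fun y : Icc (0:ℝ) β => |L₁ y.1 / S₁ y.1 - L₂ y.1 / S₂ y.1|) := by
    refine ⟨B, ?_⟩
    rintro _ ⟨y, rfl⟩
    calc |L₁ y.1 / S₁ y.1 - L₂ y.1 / S₂ y.1| ≤ |L₁ y.1 / S₁ y.1| + |L₂ y.1 / S₂ y.1| :=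
          abs_sub _ _
      _ ≤ B := add_le_add (hqbound S₁ S₁' L₁ hS₁pos hS₁mono hL₁ y.1 y.2)
          (hqbound S₂ S₂' L₂ hS₂pos hS₂mono hL₂ y.1 y.2)
  have hle : |L₁ 0 / S₁ 0 - L₂ 0 / S₂ 0|
      ≤ ⨆ y : Icc (0:ℝ) β, |L₁ y.1 / S₁ y.1 - L₂ y.1 / S₂ y.1| :=
    le_ciSup hbdd ⟨0, h0mem⟩
  rw [hS₁0, hS₂0, div_one, div_one] at hle
  have hT0 : 0 ≤ ⨆ y : Icc (0:ℝ) β, |L₁ y.1 / S₁ y.1 - L₂ y.1 / S₂ y.1| :=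
    le_trans (abs_nonneg _) hle
  rw [key]
  linarith
end

section
/- Let n and K be positive integers with n > K, let V₁,…,V_K be pairwise disjoint finite sets partitioning {1,…,n}, let n_k := |V_k|, and assume n_k ≥ 1 and |n_k·K − n| ≤ K for every k = 1,…,K. Then for any x : {1,…,n} → ℝ, |Σ_{k=1}^K Σ_{i∈V_k} (1/(K·n_k) − 1/n) x_i| ≤ (K/(n−K)) · (1/n) · Σ_{i=1}^n |x_i|. (The bound on the cross-fitting averaging error r_{an} in the proof of Theorem 2.) -/
open Finset

/-- The bound on the cross-fitting averaging error `r_{an}`: if `V₁,…,V_K` partition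
`{1,…,n}` into folds of sizes `n_k ≥ 1` with `|n_k K - n| ≤ K`, then for any values `x`,
`|Σ_k Σ_{i ∈ V_k} (1/(K n_k) - 1/n) x_i| ≤ (K/(n-K)) (1/n) Σ_i |x_i|`. -/
theorem cross_fitting_averaging_error_bound
    (n K : ℕ) (hK : 0 < K) (hKn : K < n)
    (V : Fin K → Finset (Fin n))
    (hdisj : ∀ k l, k ≠ l → Disjoint (V k) (V l))
    (hcover : (Finset.univ : Finset (Fin n)) = Finset.univ.biUnion V)
    (hcard : ∀ k, 1 ≤ (V k).card)
    (hsize : ∀ k, |((V k).card * K : ℤ) - n| ≤ K)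
    (x : Fin n → ℝ) :
    |∑ k : Fin K, ∑ i ∈ V k, (1 / ((K : ℝ) * (V k).card) - 1 / n) * x i|
      ≤ ((K : ℝ) / ((n : ℝ) - K)) * ((1 / (n : ℝ)) * ∑ i : Fin n, |x i|) := by
  set C : ℝ := (K : ℝ) / ((n : ℝ) - K) * (1 / n) with hC
  have hKpos : (0:ℝ) < K := by exact_mod_cast hK
  have hnpos : (0:ℝ) < n := by exact_mod_cast hK.trans hKn
  have hnK : (0:ℝ) < (n:ℝ) - K := by
    have : (K:ℝ) < n := by exact_mod_cast hKn
    linarith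
  have key : ∀ k : Fin K, |1 / ((K : ℝ) * (V k).card) - 1 / n| ≤ C := by
    intro k
    have hnk : (0:ℝ) < (V k).card := by exact_mod_cast hcard k
    have hsR : |((V k).card : ℝ) * K - n| ≤ K := by
      have := hsize k
      have := abs_le.mp this
      rw [abs_le]
      constructor <;> [exact_mod_cast this.1; exact_mod_cast this.2]
    have h1 : |(n:ℝ) - (V k).card * K| ≤ K := by rw [abs_sub_comm]; exact hsR
    have hlow : (n:ℝ) - K ≤ (V k).card * K := by
      have := (abs_le.mp hsR).1; linarith
    have heq : 1 / ((K:ℝ) * (V k).card) - 1 / n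
        = ((n:ℝ) - (V k).card * K) / ((K:ℝ) * (V k).card * n) := by
      field_simp
    rw [heq, abs_div, abs_of_pos (by positivity : (0:ℝ) < (K:ℝ) * (V k).card * n), hC]
    rw [div_le_iff₀ (by positivity)]
    have expand : (K:ℝ) / ((n:ℝ) - K) * (1 / n) * ((K:ℝ) * (V k).card * n)
        = (K:ℝ) * ((V k).card * K) / ((n:ℝ) - K) := by
      field_simp
    rw [expand, le_div_iff₀ hnK]
    nlinarith [h1, hlow, hnk.le, hKpos.le]
  have hsum : ∑ i : Fin n, |x i| = ∑ k : Fin K, ∑ i ∈ V k, |x i| := by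
    rw [hcover]
    exact Finset.sum_biUnion fun k _ l _ hkl => hdisj k l hkl
  calc |∑ k : Fin K, ∑ i ∈ V k, (1 / ((K : ℝ) * (V k).card) - 1 / n) * x i|
      ≤ ∑ k : Fin K, ∑ i ∈ V k, |(1 / ((K : ℝ) * (V k).card) - 1 / n) * x i| := by
        refine (Finset.abs_sum_le_sum_abs _ _).trans ?_
        exact Finset.sum_le_sum fun k _ => Finset.abs_sum_le_sum_abs _ _
    _ ≤ ∑ k : Fin K, ∑ i ∈ V k, C * |x i| := by
        refine Finset.sum_le_sum fun k _ => Finset.sum_le_sum fun i _ => ?_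
        rw [abs_mul]
        exact mul_le_mul_of_nonneg_right (key k) (abs_nonneg _)
    _ = C * ∑ i : Fin n, |x i| := by
        rw [hsum, Finset.mul_sum]
        exact Finset.sum_congr rfl fun k _ => (Finset.mul_sum _ _ _).symm
    _ = ((K : ℝ) / ((n : ℝ) - K)) * ((1 / (n : ℝ)) * ∑ i : Fin n, |x i|) := by
        rw [hC]; ring
end

section
/- Let F and G be Borel probability measures on ℝ, let κ be a Markov kernel from ℝ to ℝ, and let μ := F.prod (G ⊗ₘ κ) be the resulting probability measure on ℝ × (ℝ × ℝ), a generic point being written (t,(w,c)). Write S(u) := F([u,∞)), let c₀ := ∫ S(w) dG(w), assume 0 < c₀ and that S(w) > 0 for G-almost every w, and define G₀ := c₀⁻¹ • (G.withDensity S). Then for every u ∈ ℝ, μ({(t,(w,c)) : w ≤ u, u ≤ t, u ≤ c}) = c₀ · S(u) · ∫_{(−∞,u]} κ(w)([u,∞)) · S(w)⁻¹ dG₀(w). (The representation R₀(u) = S_X(u) ∫₀^u Q₀(u|w) S_X(w)⁻¹ G₀(dw) of the observable at-risk probability in terms of the target survival function, the observable censoring survival function and the observable truncation distribution, used to parametrize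 the efficient influence function in Section 4.) -/
/-!
The at-risk event `{W ≤ u ≤ min(T, C)}` is the product `[u, ∞) × ((-∞, u] × [u, ∞))`, so its
probability factors as `S(u) · ∫_{(-∞,u]} κ(w)([u, ∞)) dG(w)`. On the other side the density `S`
of `G₀` cancels the weight `S⁻¹` (where `0 < S < ∞`, i.e. `G`-a.e.) and `c₀` cancels `c₀⁻¹`.
-/

open Set MeasureTheory ProbabilityTheory
open scoped ENNReal

theorem setLIntegral_mul_inv_withDensity {α : Type*} [MeasurableSpace α] {μ : Measure α}
    {f : α → ℝ≥0∞} (hf : Measurable f) (hf_ne_zero : ∀ᵐ x ∂μ, f x ≠ 0)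
    (hf_ne_top : ∀ᵐ x ∂μ, f x ≠ ∞) (g : α → ℝ≥0∞) {s : Set α} (hs : MeasurableSet s) :
    ∫⁻ x in s, g x * (f x)⁻¹ ∂μ.withDensity f = ∫⁻ x in s, g x ∂μ := by
  rw [setLIntegral_withDensity_eq_setLIntegral_mul_non_measurable _ hf _ hs
    (ae_restrict_of_ae (hf_ne_top.mono fun _ h => h.lt_top))]
  refine setLIntegral_congr_fun_ae hs ?_
  filter_upwards [hf_ne_zero, hf_ne_top] with x h0 htop _
  rw [Pi.mul_apply, mul_left_comm, ENNReal.mul_inv_cancel h0 htop, mul_one]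

theorem antitone_measure_Ici {F : Measure ℝ} : Antitone fun u => F (Ici u) :=
  fun _ _ hab => measure_mono (Ici_subset_Ici.mpr hab)

theorem prod_compProd_atRisk (F G : Measure ℝ) [SFinite F] [SFinite G]
    (κ : Kernel ℝ ℝ) [IsSFiniteKernel κ] (u : ℝ) :
    F.prod (G ⊗ₘ κ) {q : ℝ × ℝ × ℝ | q.2.1 ≤ u ∧ u ≤ q.1 ∧ u ≤ q.2.2}
      = F (Ici u) * ∫⁻ w in Iic u, κ w (Ici u) ∂G := by
  have hset : {q : ℝ × ℝ × ℝ | q.2.1 ≤ u ∧ u ≤ q.1 ∧ u ≤ q.2.2}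
      = Ici u ×ˢ (Iic u ×ˢ Ici u) := by
    ext ⟨t, w, c⟩
    simp only [mem_ofPred_eq, mem_prod, mem_Ici, mem_Iic]
    tauto
  rw [hset, Measure.prod_prod, Measure.compProd_apply_prod measurableSet_Iic measurableSet_Ici]

/-- The representation `R₀(u) = S_X(u) ∫₀^u Q₀(u|w) S_X(w)⁻¹ G₀(dw)` of the observable
at-risk probability in terms of the target survival function `S`, the censoring kernel `κ`
and the observable truncation distribution `G₀ = c₀⁻¹ • (G.withDensity S)`. -/
theorem at_risk_representation
    (F G : Measure ℝ) [IsProbabilityMeasure F] [IsProbabilityMeasure G]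
    (κ : Kernel ℝ ℝ) [IsMarkovKernel κ]
    (μ : Measure (ℝ × ℝ × ℝ)) (hμ : μ = F.prod (G ⊗ₘ κ))
    (S : ℝ → ℝ≥0∞) (hS : ∀ u, S u = F (Ici u))
    (c₀ : ℝ≥0∞) (hc₀ : c₀ = ∫⁻ w, S w ∂G) (hc₀pos : 0 < c₀)
    (hSpos : ∀ᵐ w ∂G, 0 < S w)
    (G₀ : Measure ℝ) (hG₀ : G₀ = c₀⁻¹ • (G.withDensity S)) :
    ∀ u : ℝ,
      μ {q : ℝ × ℝ × ℝ | q.2.1 ≤ u ∧ u ≤ q.1 ∧ u ≤ q.2.2}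
        = c₀ * S u * ∫⁻ w in Iic u, κ w (Ici u) * (S w)⁻¹ ∂G₀ := by
  intro u
  obtain rfl : S = fun u => F (Ici u) := funext hS
  have hc₀_ne_top : c₀ ≠ ∞ := hc₀ ▸
    (IsFiniteMeasure.lintegral_lt_top_of_bounded_to_ennreal G
      ⟨1, fun _ => by simpa using prob_le_one⟩).ne
  rw [hμ, hG₀, prod_compProd_atRisk, Measure.restrict_smul, lintegral_smul_measure,
    setLIntegral_mul_inv_withDensity antitone_measure_Ici.measurable
      (hSpos.mono fun _ h => h.ne') (ae_of_all _ fun _ => measure_ne_top _ _) _ measurableSet_Iic,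
    smul_eq_mul, mul_right_comm c₀, ← mul_assoc c₀,
    ENNReal.mul_inv_cancel hc₀pos.ne' hc₀_ne_top, one_mul, mul_comm]
end
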